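/- arXiv:1401.3115 — 9 statements merged into one kernel-verified Lean document; each statement's English description precedes it below -/
import Mathlib

section
/- For every a ∈ ℝ (including a = 0) and every t > 0, the function φ_a satisfies the boundary conditions φ_a(0, t) = 0 and φ_a(t, t) = 0. -/
open Real Filter

/-- For `a ≠ 0`, the function `φ_a(x,t) = (π / sinh(aπ)) Σ_{k ∈ ℤ} sin(ax + 2kat) e^{−2(kx + k²t)}`. -/
noncomputable def phi (a x t : ℝ) : ℝ :=
  (Real.pi / Real.sinh (a * Real.pi)) *
    ∑' k : ℤ, Real.sin (a * x + 2 * (k : ℝ) * a * t) * Real.exp (-2 * ((k : ℝ) * x + (k : ℝ) ^ 2 * t))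

/-- The function `φ_0(x,t) = Σ_{k ∈ ℤ} (x + 2kt) e^{−2(kx + k²t)}`. -/
noncomputable def phi0 (x t : ℝ) : ℝ :=
  ∑' k : ℤ, (x + 2 * (k : ℝ) * t) * Real.exp (-2 * ((k : ℝ) * x + (k : ℝ) ^ 2 * t))

/-- `φ_a` for all `a ∈ ℝ`, with `φ_0` as the value at `a = 0`. -/
noncomputable def phiA (a x t : ℝ) : ℝ := if a = 0 then phi0 x t else phi a x t

lemma tsum_zero_of_equiv_neg (e : ℤ ≃ ℤ) (f : ℤ → ℝ) (h : ∀ k, f (e k) = -f k) :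
    ∑' k, f k = 0 := by
  have h1 : ∑' k, f (e k) = ∑' k, f k := e.tsum_eq f
  have h2 : ∑' k : ℤ, f (e k) = -∑' k : ℤ, f k := by
    rw [show (fun k : ℤ => f (e k)) = fun k : ℤ => -f k from funext h, tsum_neg]
  linarith

/-- The involution `k ↦ -(k+1)` on `ℤ` as an equiv. -/
def negSucc : ℤ ≃ ℤ :=
  Function.Involutive.toPerm (fun k => -(k + 1)) (by intro k; ring)

/-- For every `a ∈ ℝ` (including `a = 0`) and every `t > 0`, the function `φ_a` satisfies the
boundary conditions `φ_a(0, t) = 0` and `φ_a(t, t) = 0`. -/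
theorem phiA_boundary (a t : ℝ) (ht : 0 < t) :
    phiA a 0 t = 0 ∧ phiA a t t = 0 := by
  unfold phiA phi phi0
  split_ifs with ha
  · constructor
    · apply tsum_zero_of_equiv_neg (Equiv.neg ℤ)
      intro k
      push_cast [Equiv.neg_apply]
      ring
    · apply tsum_zero_of_equiv_neg negSucc
      intro k
      show (t + 2 * ((-(k + 1) : ℤ) : ℝ) * t) * Real.exp (-2 * (((-(k + 1) : ℤ) : ℝ) * t + ((-(k + 1) : ℤ) : ℝ) ^ 2 * t)) = _
      push_cast
      rw [show ((-(↑k + 1) : ℝ) * t + (-(↑k + 1) : ℝ) ^ 2 * t) = ((k : ℝ) * t + (k : ℝ) ^ 2 * t) by ring]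
      ring
  · constructor
    · rw [mul_eq_zero]; right
      apply tsum_zero_of_equiv_neg (Equiv.neg ℤ)
      intro k
      push_cast [Equiv.neg_apply]
      rw [show (a * 0 + 2 * (-(k : ℝ)) * a * t) = -(a * 0 + 2 * (k : ℝ) * a * t) by ring,
        Real.sin_neg,
        show (-2 * (-(k : ℝ) * 0 + (-(k : ℝ)) ^ 2 * t)) = (-2 * ((k : ℝ) * 0 + (k : ℝ) ^ 2 * t)) by ring]
      ring
    · rw [mul_eq_zero]; right
      apply tsum_zero_of_equiv_neg negSucc
      intro k
      show Real.sin (a * t + 2 * ((-(k + 1) : ℤ) : ℝ) * a * t) * Real.exp (-2 * (((-(k + 1) : ℤ) : ℝ) * t + ((-(k + 1) : ℤ) : ℝ) ^ 2 * t)) = _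
      push_cast
      rw [show (a * t + 2 * (-((k : ℝ) + 1)) * a * t) = -(a * t + 2 * (k : ℝ) * a * t) by ring,
        Real.sin_neg,
        show (-2 * (-((k : ℝ) + 1) * t + (-((k : ℝ) + 1)) ^ 2 * t)) = (-2 * ((k : ℝ) * t + (k : ℝ) ^ 2 * t)) by ring]
      ring
end

section
/- For every a ∈ ℝ (including a = 0), the function φ_a is twice continuously differentiable in x and once in t on ℝ × (0,∞) and satisfies (1/2)·∂²φ_a/∂x² + ∂φ_a/∂t = −(a²/2)·φ_a there; equivalently, (x,t) ↦ exp(a²t/2)·φ_a(x,t) is space-time harmonic for the operator (1/2)∂²/∂x² + ∂/∂t. -/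
open Real Filter

/-!
The `k`-th term of `φ_a` is the imaginary part of `e_k(x,t) = exp(α(k) x + β(k) t)` with
`α(k) = ia - 2k` and `β(k) = 2iak - 2k²`. Since `α(k)²/2 + β(k) = -a²/2` for every `k`, each
series `θ_P = Σ_k P(k) e_k` with polynomial weights `P` is an eigenfunction of `(1/2)∂ₓ² + ∂ₜ`
with eigenvalue `-a²/2`: differentiating in `x` or `t` multiplies the weight by `α` or `β`, and
the Gaussian factor `exp(-2k²t)` dominates every polynomial weight locally uniformly in `(x,t)`,
`t > 0`, which justifies differentiating termwise. For `a = 0` the function `φ_0` is the real part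
of the Appell transform `x θ_1 - t ∂ₓθ_1`, and this transform maps eigenfunctions to
eigenfunctions.
-/

open Complex Polynomial
open scoped ContDiff Topology

section SpaceTime

variable {E : Type*} [NormedAddCommGroup E] [NormedSpace ℝ E]

noncomputable def spaceTimeGenerator (U : ℝ → ℝ → E) (x t : ℝ) : E :=
  (1 / 2 : ℝ) • deriv (fun x' => deriv (fun x'' => U x'' t) x') x + deriv (fun t' => U x t') t

lemma spaceTimeGenerator_eq_of_hasDerivAt {U : ℝ → ℝ → E} {U₁ : ℝ → E} {U₂ Uₜ : E} {x t : ℝ}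
    (h₁ : ∀ y, HasDerivAt (U · t) (U₁ y) y) (h₂ : HasDerivAt U₁ U₂ x)
    (hₜ : HasDerivAt (U x ·) Uₜ t) :
    spaceTimeGenerator U x t = (1 / 2 : ℝ) • U₂ + Uₜ := by
  rw [spaceTimeGenerator, funext fun y => (h₁ y).deriv, h₂.deriv, hₜ.deriv]

lemma spaceTimeGenerator_clm_comp (L : E →L[ℝ] ℝ) {U : ℝ → ℝ → E} {x t : ℝ}
    (hx : ContDiff ℝ ∞ (U · t)) (ht : DifferentiableAt ℝ (U x ·) t) :
    spaceTimeGenerator (fun x t => L (U x t)) x t = L (spaceTimeGenerator U x t) := by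
  have hL {f : ℝ → E} {y : ℝ} (hf : DifferentiableAt ℝ f y) :
      deriv (fun y => L (f y)) y = L (deriv f y) :=
    (L.hasFDerivAt.comp_hasDerivAt y hf.hasDerivAt).deriv
  have hderiv : ContDiff ℝ ∞ (deriv (U · t)) := hx.iterate_deriv 1
  rw [spaceTimeGenerator, spaceTimeGenerator, funext fun y => hL (hx.differentiable (by simp) y),
    hL (hderiv.differentiable (by simp) x), hL ht, map_add, map_smul, smul_eq_mul]

lemma contDiffOn_of_hasDerivAt_family {ι : Type*} {F : ι → ℝ → E} (σ : ι → ι) {s : Set ℝ}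
    (hs : IsOpen s) (hF : ∀ i, ∀ y ∈ s, HasDerivAt (F i) (F (σ i) y) y) (i : ι) :
    ContDiffOn ℝ ∞ (F i) s := by
  refine contDiffOn_infty.mpr fun n => ?_
  induction n generalizing i with
  | zero => exact contDiffOn_zero.mpr fun y hy => (hF i y hy).continuousAt.continuousWithinAt
  | succ n ih =>
    rw [Nat.cast_succ, contDiffOn_succ_iff_deriv_of_isOpen hs]
    exact ⟨fun y hy => (hF i y hy).differentiableAt.differentiableWithinAt, by simp,
      (ih (σ i)).congr fun y hy => (hF i y hy).deriv⟩

lemma smooth_eigenfunction_of_clm_comp {u : ℝ → ℝ → ℝ} {U : ℝ → ℝ → E} (L : E →L[ℝ] ℝ) {c : ℝ}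
    (hu : ∀ x t, 0 < t → u x t = L (U x t)) (hx : ∀ t, 0 < t → ContDiff ℝ ∞ (U · t))
    (ht : ∀ x, ContDiffOn ℝ ∞ (U x ·) (Set.Ioi 0))
    (hU : ∀ x t, 0 < t → spaceTimeGenerator U x t = c • U x t) :
    (∀ t, 0 < t → ContDiff ℝ 2 (u · t)) ∧ (∀ x, ContDiffOn ℝ 1 (u x ·) (Set.Ioi 0)) ∧
      ∀ x t, 0 < t → spaceTimeGenerator u x t = c * u x t := by
  have hux (t : ℝ) (h : 0 < t) : (u · t) = fun x => L (U x t) := funext fun x => hu x t h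
  refine ⟨fun t h => ?_, fun x => ?_, fun x t h => ?_⟩
  · rw [hux t h]
    exact (L.contDiff.comp (hx t h)).of_le ENat.LEInfty.out
  · exact ((L.contDiff.comp_contDiffOn (ht x)).congr fun s hs => hu x s hs).of_le
      ENat.LEInfty.out
  · have hut : (u x ·) =ᶠ[𝓝 t] fun s => L (U x s) :=
      eventually_of_mem (Ioi_mem_nhds h) fun s hs => hu x s hs
    have hgen : spaceTimeGenerator u x t = spaceTimeGenerator (fun x t => L (U x t)) x t := by
      simp only [spaceTimeGenerator, hux t h, hut.deriv_eq]
    rw [hgen, spaceTimeGenerator_clm_comp L (hx t h)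
      (((ht x).differentiableOn (by simp) t h).differentiableAt (Ioi_mem_nhds h)), hU x t h,
      map_smul, smul_eq_mul, hu x t h]

end SpaceTime

lemma summable_norm_eval_mul_exp (P : ℂ[X]) (R : ℝ) {τ : ℝ} (hτ : 0 < τ) :
    Summable fun k : ℤ => ‖P.eval (k : ℂ)‖ * Real.exp (2 * R * |(k : ℝ)| - τ * (k : ℝ) ^ 2) := by
  induction P using Polynomial.induction_on' with
  | add p q hp hq =>
    refine (hp.add hq).of_nonneg_of_le (fun k => by positivity) fun k => ?_
    rw [eval_add, ← add_mul]
    gcongr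
    exact norm_add_le _ _
  | monomial n c =>
    have hT : 0 < τ / π := div_pos hτ pi_pos
    refine ((summable_pow_mul_jacobiTheta₂_term_bound (R / π) hT n).mul_left ‖c‖).congr
      fun k => ?_
    simp only [eval_monomial, norm_mul, norm_pow, norm_intCast, Int.cast_abs, mul_assoc]
    congr 3
    field_simp
    ring

namespace PhiA

variable (a : ℝ)

noncomputable def spaceSymbol : ℂ[X] := C (a * I) - 2 * X

noncomputable def timeSymbol : ℂ[X] := C (2 * a * I) * X - 2 * X ^ 2

noncomputable def mode (k : ℤ) (x t : ℝ) : ℂ :=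
  cexp ((spaceSymbol a).eval (k : ℂ) * x + (timeSymbol a).eval (k : ℂ) * t)

noncomputable def theta (P : ℂ[X]) (x t : ℝ) : ℂ :=
  ∑' k : ℤ, P.eval (k : ℂ) * mode a k x t

lemma mode_eq (k : ℤ) (x t : ℝ) :
    mode a k x t =
      cexp (((-2 * (k * x + k ^ 2 * t) : ℝ) : ℂ) + ((a * x + 2 * k * a * t : ℝ) : ℂ) * I) := by
  rw [mode]
  congr 1
  simp only [spaceSymbol, timeSymbol, eval_sub, eval_mul, eval_C, eval_X, eval_pow, eval_ofNat]
  push_cast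
  ring

lemma norm_mode (k : ℤ) (x t : ℝ) :
    ‖mode a k x t‖ = Real.exp (-2 * (k * x + k ^ 2 * t)) := by
  rw [mode_eq, norm_exp, add_re, ofReal_re, re_ofReal_mul, I_re, mul_zero, add_zero]

lemma norm_mode_le (k : ℤ) {x t R τ : ℝ} (hx : |x| ≤ R) (ht : τ ≤ 2 * t) :
    ‖mode a k x t‖ ≤ Real.exp (2 * R * |(k : ℝ)| - τ * (k : ℝ) ^ 2) := by
  rw [norm_mode]
  gcongr
  have hkx : -(k * x) ≤ |(k : ℝ)| * R :=
    (neg_le_abs _).trans ((abs_mul _ _).trans_le (by gcongr))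
  nlinarith [sq_nonneg (k : ℝ)]

lemma half_sq_spaceSymbol_add_timeSymbol (k : ℤ) :
    (1 / 2) * (spaceSymbol a).eval (k : ℂ) ^ 2 + (timeSymbol a).eval (k : ℂ) = -(a ^ 2 / 2) := by
  simp only [spaceSymbol, timeSymbol, eval_sub, eval_mul, eval_C, eval_X, eval_pow, eval_ofNat]
  linear_combination (a ^ 2 / 2 : ℂ) * I_sq

lemma hasDerivAt_mode_space (k : ℤ) (x t : ℝ) :
    HasDerivAt (mode a k · t) ((spaceSymbol a).eval (k : ℂ) * mode a k x t) x := by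
  have := (((hasDerivAt_id x).ofReal_comp.const_mul ((spaceSymbol a).eval (k : ℂ))).add_const
    ((timeSymbol a).eval (k : ℂ) * t)).cexp
  simpa [mode, mul_comm] using this

lemma hasDerivAt_mode_time (k : ℤ) (x t : ℝ) :
    HasDerivAt (mode a k x ·) ((timeSymbol a).eval (k : ℂ) * mode a k x t) t := by
  have := (((hasDerivAt_id t).ofReal_comp.const_mul ((timeSymbol a).eval (k : ℂ))).const_add
    ((spaceSymbol a).eval (k : ℂ) * x)).cexp
  simpa [mode, mul_comm] using this

lemma summable_eval_mul_mode (P : ℂ[X]) (x : ℝ) {t : ℝ} (ht : 0 < t) :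
    Summable fun k : ℤ => P.eval (k : ℂ) * mode a k x t :=
  (summable_norm_eval_mul_exp P |x| (by positivity : 0 < 2 * t)).of_norm_bounded fun k => by
    rw [norm_mul]
    gcongr
    exact norm_mode_le a k le_rfl le_rfl

lemma hasDerivAt_theta_space (P : ℂ[X]) {t : ℝ} (ht : 0 < t) (x : ℝ) :
    HasDerivAt (theta a P · t) (theta a (P * spaceSymbol a) x t) x := by
  have hx : x ∈ Metric.ball (0 : ℝ) (|x| + 1) := by simp
  unfold theta
  refine hasDerivAt_tsum_of_isPreconnected (g := fun (k : ℤ) x => P.eval (k : ℂ) * mode a k x t)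
    (g' := fun (k : ℤ) x => (P * spaceSymbol a).eval (k : ℂ) * mode a k x t)
    (summable_norm_eval_mul_exp (P * spaceSymbol a) (|x| + 1) (by positivity : 0 < 2 * t))
    Metric.isOpen_ball (convex_ball _ _).isPreconnected (fun k y _ => ?_) (fun k y hy => ?_) hx
    (summable_eval_mul_mode a P x ht) hx
  · simpa [mul_assoc] using (hasDerivAt_mode_space a k y t).const_mul (P.eval (k : ℂ))
  · rw [norm_mul]
    gcongr
    exact norm_mode_le a k (by simpa using (Metric.mem_ball.mp hy).le) le_rfl

lemma hasDerivAt_theta_time (P : ℂ[X]) (x : ℝ) {t : ℝ} (ht : 0 < t) :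
    HasDerivAt (theta a P x ·) (theta a (P * timeSymbol a) x t) t := by
  have ht' : t ∈ Set.Ioi (t / 2) := by simp [ht]
  unfold theta
  refine hasDerivAt_tsum_of_isPreconnected (g := fun (k : ℤ) t => P.eval (k : ℂ) * mode a k x t)
    (g' := fun (k : ℤ) t => (P * timeSymbol a).eval (k : ℂ) * mode a k x t)
    (summable_norm_eval_mul_exp (P * timeSymbol a) |x| ht)
    isOpen_Ioi (convex_Ioi _).isPreconnected (fun k s _ => ?_) (fun k s hs => ?_) ht'
    (summable_eval_mul_mode a P x ht) ht'
  · simpa [mul_assoc] using (hasDerivAt_mode_time a k x s).const_mul (P.eval (k : ℂ))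
  · rw [norm_mul]
    gcongr
    exact norm_mode_le a k le_rfl (by linarith [Set.mem_Ioi.mp hs])

lemma contDiff_theta_space (P : ℂ[X]) {t : ℝ} (ht : 0 < t) : ContDiff ℝ ∞ (theta a P · t) :=
  contDiffOn_univ.mp <| contDiffOn_of_hasDerivAt_family (F := fun P x => theta a P x t)
    (· * spaceSymbol a) isOpen_univ (fun P x _ => hasDerivAt_theta_space a P ht x) P

lemma contDiffOn_theta_time (P : ℂ[X]) (x : ℝ) :
    ContDiffOn ℝ ∞ (theta a P x ·) (Set.Ioi 0) :=
  contDiffOn_of_hasDerivAt_family (F := fun P t => theta a P x t) (· * timeSymbol a) isOpen_Ioi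
    (fun P _ ht => hasDerivAt_theta_time a P x ht) P

lemma theta_heat (P : ℂ[X]) (x : ℝ) {t : ℝ} (ht : 0 < t) :
    (1 / 2) * theta a (P * spaceSymbol a * spaceSymbol a) x t + theta a (P * timeSymbol a) x t
      = -(a ^ 2 / 2) * theta a P x t := by
  simp only [theta]
  rw [← tsum_mul_left, ← tsum_mul_left, ← ((summable_eval_mul_mode a _ x ht).mul_left _).tsum_add
    (summable_eval_mul_mode a _ x ht)]
  refine tsum_congr fun k => ?_
  simp only [eval_mul]
  linear_combination P.eval (k : ℂ) * mode a k x t * half_sq_spaceSymbol_add_timeSymbol a k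

lemma spaceTimeGenerator_theta (P : ℂ[X]) (x : ℝ) {t : ℝ} (ht : 0 < t) :
    spaceTimeGenerator (theta a P) x t = (-(a ^ 2 / 2) : ℝ) • theta a P x t := by
  rw [spaceTimeGenerator_eq_of_hasDerivAt (hasDerivAt_theta_space a P ht)
    (hasDerivAt_theta_space a _ ht x) (hasDerivAt_theta_time a P x ht), real_smul, real_smul]
  push_cast
  exact theta_heat a P x ht

noncomputable def appell (P : ℂ[X]) (x t : ℝ) : ℂ :=
  x * theta a P x t - t * theta a (P * spaceSymbol a) x t

lemma hasDerivAt_appell_space (P : ℂ[X]) {t : ℝ} (ht : 0 < t) (x : ℝ) :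
    HasDerivAt (appell a P · t) (theta a P x t + appell a (P * spaceSymbol a) x t) x := by
  have := ((hasDerivAt_id x).ofReal_comp.mul (hasDerivAt_theta_space a P ht x)).sub
    ((hasDerivAt_theta_space a (P * spaceSymbol a) ht x).const_mul (t : ℂ))
  refine this.congr_deriv ?_
  simp only [appell, id, ofReal_one]
  ring

lemma hasDerivAt_appell_time (P : ℂ[X]) (x : ℝ) {t : ℝ} (ht : 0 < t) :
    HasDerivAt (appell a P x ·) (appell a (P * timeSymbol a) x t - theta a (P * spaceSymbol a) x t)
      t := by
  have := ((hasDerivAt_theta_time a P x ht).const_mul (x : ℂ)).sub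
    ((hasDerivAt_id t).ofReal_comp.mul (hasDerivAt_theta_time a (P * spaceSymbol a) x ht))
  refine this.congr_deriv ?_
  simp only [appell, id, ofReal_one, mul_right_comm P (timeSymbol a)]
  ring

lemma contDiff_appell_space (P : ℂ[X]) {t : ℝ} (ht : 0 < t) : ContDiff ℝ ∞ (appell a P · t) :=
  (ofRealCLM.contDiff.mul (contDiff_theta_space a P ht)).sub
    (contDiff_const.mul (contDiff_theta_space a _ ht))

lemma contDiffOn_appell_time (P : ℂ[X]) (x : ℝ) :
    ContDiffOn ℝ ∞ (appell a P x ·) (Set.Ioi 0) :=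
  (contDiffOn_const.mul (contDiffOn_theta_time a P x)).sub
    (ofRealCLM.contDiff.contDiffOn.mul (contDiffOn_theta_time a _ x))

lemma spaceTimeGenerator_appell (P : ℂ[X]) (x : ℝ) {t : ℝ} (ht : 0 < t) :
    spaceTimeGenerator (appell a P) x t = (-(a ^ 2 / 2) : ℝ) • appell a P x t := by
  rw [spaceTimeGenerator_eq_of_hasDerivAt (hasDerivAt_appell_space a P ht)
    ((hasDerivAt_theta_space a P ht x).add (hasDerivAt_appell_space a _ ht x))
    (hasDerivAt_appell_time a P x ht), real_smul, real_smul]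
  simp only [appell, mul_right_comm P (timeSymbol a)]
  push_cast
  linear_combination
    (x : ℂ) * theta_heat a P x ht - (t : ℂ) * theta_heat a (P * spaceSymbol a) x ht

lemma phi_eq_im_theta (x : ℝ) {t : ℝ} (ht : 0 < t) :
    phi a x t = π / Real.sinh (a * π) * (theta a 1 x t).im := by
  rw [phi, theta, im_tsum (summable_eval_mul_mode a 1 x ht)]
  congr 1
  refine tsum_congr fun k => ?_
  rw [eval_one, one_mul, mode_eq, exp_im]
  simp only [add_re, add_im, ofReal_re, ofReal_im, re_ofReal_mul, im_ofReal_mul, I_re, I_im]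
  ring_nf

lemma phi0_eq_re_appell (x : ℝ) {t : ℝ} (ht : 0 < t) : phi0 x t = (appell 0 1 x t).re := by
  have hterm (k : ℤ) : (x : ℂ) * ((1 : ℂ[X]).eval (k : ℂ) * mode 0 k x t)
      - t * ((1 * spaceSymbol 0).eval (k : ℂ) * mode 0 k x t)
      = ((x + 2 * k * t) * Real.exp (-2 * (k * x + k ^ 2 * t)) : ℝ) := by
    simp only [mode_eq, spaceSymbol, one_mul, eval_one, eval_sub, eval_mul, eval_C, eval_ofNat,
      eval_X, zero_mul, mul_zero, ofReal_zero, add_zero]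
    push_cast
    ring
  rw [phi0, appell, theta, theta, ← tsum_mul_left, ← tsum_mul_left,
    ← ((summable_eval_mul_mode 0 1 x ht).mul_left _).tsum_sub
      ((summable_eval_mul_mode 0 _ x ht).mul_left _)]
  simp_rw [hterm]
  rw [← ofReal_tsum, ofReal_re]

end PhiA

/-- For every `a ∈ ℝ` (including `a = 0`), the function `φ_a` is twice continuously
differentiable in `x` and once continuously differentiable in `t` on `ℝ × (0,∞)`, and satisfies
`(1/2)·∂²φ_a/∂x² + ∂φ_a/∂t = −(a²/2)·φ_a` there; equivalently,
`(x,t) ↦ exp(a²t/2)·φ_a(x,t)` is space-time harmonic for `(1/2)∂²/∂x² + ∂/∂t`. -/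
theorem phiA_spacetime_harmonic (a : ℝ) :
    (∀ t : ℝ, 0 < t → ContDiff ℝ 2 (fun x : ℝ => phiA a x t)) ∧
    (∀ x : ℝ, ContDiffOn ℝ 1 (fun t' : ℝ => phiA a x t') (Set.Ioi (0 : ℝ))) ∧
    (∀ x t : ℝ, 0 < t →
      (1 / 2) * deriv (fun x' : ℝ => deriv (fun x'' : ℝ => phiA a x'' t) x') x
        + deriv (fun t' : ℝ => phiA a x t') t
        = -(a ^ 2 / 2) * phiA a x t) := by
  rcases eq_or_ne a 0 with rfl | ha
  · exact smooth_eigenfunction_of_clm_comp reCLM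
      (fun x t ht => by rw [phiA, if_pos rfl, PhiA.phi0_eq_re_appell x ht, reCLM_apply])
      (fun t ht => PhiA.contDiff_appell_space 0 1 ht) (PhiA.contDiffOn_appell_time 0 1)
      (fun x t ht => PhiA.spaceTimeGenerator_appell 0 1 x ht)
  · exact smooth_eigenfunction_of_clm_comp ((π / Real.sinh (a * π)) • imCLM)
      (fun x t ht => by rw [phiA, if_neg ha, PhiA.phi_eq_im_theta a x ht]; rfl)
      (fun t ht => PhiA.contDiff_theta_space a 1 ht) (PhiA.contDiffOn_theta_time a 1)
      (fun x t ht => PhiA.spaceTimeGenerator_theta a 1 x ht)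
end

section
/- For every a ∈ ℝ, x ∈ ℝ and t > 0, the following Poisson summation identity holds: Σ_{k ∈ ℤ} sin(ax + 2kta) · exp(−2(kx + k²t)) = exp(x²/(2t) − a²t/2) · Σ_{k ∈ ℤ} √(π/(2t)) · exp(−k²π²/(2t)) · sinh(kπa) · sin(kπx/t), where both series converge absolutely. -/
/-!
Both sides are imaginary parts of Gaussian theta sums. With `z = x/(2t) - ia/2`, the `k`-th
term on the left is the imaginary part of `e^{x²/(2t) - a²t/2} e^{-2t(k+z)²}`, and the
functional equation of the Jacobi theta function gives `∑ₖ e^{-s(k+w)²} = √(π/s) θ(w, iπ/s)`.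
Pairing the terms `k` and `-k` of `θ(z, iπ/(2t))` turns it into
`∑ₖ e^{-k²π²/(2t)} cos(2πkz)`, and `Im cos(2πkz) = sinh(kπa) sin(kπx/t)`.
-/

open Real Complex

lemma hasSum_jacobiTheta₂_cos (z : ℂ) {τ : ℂ} (hτ : 0 < τ.im) :
    HasSum (fun n : ℤ => cexp (π * I * n ^ 2 * τ) * Complex.cos (2 * π * n * z))
      (jacobiTheta₂ z τ) := by
  have h := ((hasSum_jacobiTheta₂_term z hτ).add (hasSum_jacobiTheta₂_term (-z) hτ)).div_const 2
  rw [jacobiTheta₂_neg_left, add_self_div_two] at h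
  refine h.congr_fun fun n => ?_
  rw [← mul_div_cancel_left₀ (Complex.cos _) two_ne_zero, two_cos, mul_div_assoc',
    mul_add, ← Complex.exp_add, ← Complex.exp_add, jacobiTheta₂_term, jacobiTheta₂_term]
  ring_nf

lemma hasSum_cexp_neg_mul_add_sq {s : ℝ} (hs : 0 < s) (w : ℂ) :
    HasSum (fun n : ℤ => cexp (-s * (n + w) ^ 2))
      (√(π / s) * jacobiTheta₂ w (I * π / s)) := by
  have hs' : (s : ℂ) ≠ 0 := by exact_mod_cast hs.ne'
  have hτ : 0 < (I * s / π).im := by simp; positivity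
  have hterm (n : ℤ) : cexp (-s * (n + w) ^ 2) =
      cexp (-s * w ^ 2) * jacobiTheta₂_term n (I * s * w / π) (I * s / π) := by
    rw [jacobiTheta₂_term, ← Complex.exp_add]
    congr 1
    field_simp
    linear_combination -(2 * n * w + n ^ 2) * I_sq
  have hroot : (-I * (I * s / π)) ^ (1 / 2 : ℂ) = ((√(s / π) : ℝ) : ℂ) := by
    rw [show -I * (I * s / π) = ((s / π : ℝ) : ℂ) by
        push_cast; linear_combination (-(s : ℂ) / π) * I_sq,
      Real.sqrt_eq_rpow, Complex.ofReal_cpow (by positivity)]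
    norm_num
  have hexp : -π * I * (I * s * w / π) ^ 2 / (I * s / π) = s * w ^ 2 := by
    rw [div_pow, mul_pow, mul_pow, I_sq]
    field_simp
  have hτ' : -1 / (I * s / π) = I * π / s := by
    rw [div_div_eq_mul_div, ← div_div, div_I]
    ring
  have hval : cexp (-s * w ^ 2) * jacobiTheta₂ (I * s * w / π) (I * s / π) =
      √(π / s) * jacobiTheta₂ w (I * π / s) := by
    rw [jacobiTheta₂_functional_equation, hroot, hexp, hτ',
      show I * s * w / π / (I * s / π) = w by field_simp, ← mul_assoc, ← mul_assoc,
      mul_right_comm _ _ (cexp _), ← Complex.exp_add, neg_mul, neg_add_cancel, Complex.exp_zero,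
      one_mul, one_div, ← ofReal_inv, ← Real.sqrt_inv, inv_div]
  rw [← hval]
  exact ((hasSum_jacobiTheta₂_term _ hτ).mul_left _).congr_fun hterm

lemma im_exp_mul_cexp_neg_mul_add_sq (a x : ℝ) {t : ℝ} (ht : t ≠ 0) (k : ℤ) :
    (Real.exp (x ^ 2 / (2 * t) - a ^ 2 * t / 2) *
        cexp (-((2 * t : ℝ) : ℂ) * (k + (x / (2 * t) - a / 2 * I)) ^ 2)).im =
      Real.sin (a * x + 2 * k * t * a) * Real.exp (-2 * (k * x + k ^ 2 * t)) := by
  have ht' : (t : ℂ) ≠ 0 := by exact_mod_cast ht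
  have harg : ((x ^ 2 / (2 * t) - a ^ 2 * t / 2 : ℝ) : ℂ) +
      -((2 * t : ℝ) : ℂ) * (k + (x / (2 * t) - a / 2 * I)) ^ 2 =
      ((-2 * (k * x + k ^ 2 * t) : ℝ) : ℂ) + ((a * x + 2 * k * t * a : ℝ) : ℂ) * I := by
    push_cast
    field_simp
    linear_combination (-(a : ℂ) ^ 2 * t ^ 2) * I_sq
  rw [ofReal_exp, ← Complex.exp_add, harg, exp_add_mul_I, ← ofReal_exp, ← ofReal_cos,
    ← ofReal_sin, im_ofReal_mul, add_im, ofReal_im, mul_I_im, ofReal_re, zero_add, mul_comm]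

lemma im_sqrt_mul_cexp_mul_cos (a x t : ℝ) (k : ℤ) :
    ((√(π / (2 * t)) : ℂ) * (cexp (π * I * k ^ 2 * (I * π / ((2 * t : ℝ) : ℂ))) *
        Complex.cos (2 * π * k * (x / (2 * t) - a / 2 * I)))).im =
      √(π / (2 * t)) * Real.exp (-(k ^ 2 * π ^ 2) / (2 * t)) * Real.sinh (k * π * a) *
        Real.sin (k * π * x / t) := by
  have hexp : π * I * k ^ 2 * (I * π / ((2 * t : ℝ) : ℂ)) =
      ((-(k ^ 2 * π ^ 2) / (2 * t) : ℝ) : ℂ) := by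
    push_cast
    linear_combination (π ^ 2 * k ^ 2 / (2 * t) : ℂ) * I_sq
  have hcos : 2 * π * k * (x / (2 * t) - a / 2 * I) =
      ((k * π * x / t : ℝ) : ℂ) + ((-(k * π * a) : ℝ) : ℂ) * I := by
    push_cast
    ring
  rw [hexp, hcos, cos_add_mul_I, ← ofReal_exp, ← ofReal_cos, ← ofReal_cosh, ← ofReal_sin,
    ← ofReal_sinh, Real.sinh_neg, ← mul_assoc, ← ofReal_mul, im_ofReal_mul, ← ofReal_mul,
    ← ofReal_mul, sub_im, ofReal_im, mul_I_im, ofReal_re]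
  ring

/-- For every `a ∈ ℝ`, `x ∈ ℝ`, `t > 0`, the Poisson summation identity
`Σ_{k ∈ ℤ} sin(ax + 2kta) e^{−2(kx + k²t)}
  = e^{x²/(2t) − a²t/2} Σ_{k ∈ ℤ} √(π/(2t)) e^{−k²π²/(2t)} sinh(kπa) sin(kπx/t)`
holds, and both series converge absolutely. -/
theorem poisson_summation_phi_a (a x t : ℝ) (ht : 0 < t) :
    Summable (fun k : ℤ => Real.sin (a * x + 2 * (k : ℝ) * t * a) *
      Real.exp (-2 * ((k : ℝ) * x + (k : ℝ) ^ 2 * t))) ∧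
    Summable (fun k : ℤ => Real.sqrt (Real.pi / (2 * t)) *
      Real.exp (-((k : ℝ) ^ 2 * Real.pi ^ 2) / (2 * t)) *
      Real.sinh ((k : ℝ) * Real.pi * a) * Real.sin ((k : ℝ) * Real.pi * x / t)) ∧
    (∑' k : ℤ, Real.sin (a * x + 2 * (k : ℝ) * t * a) *
        Real.exp (-2 * ((k : ℝ) * x + (k : ℝ) ^ 2 * t)))
      = Real.exp (x ^ 2 / (2 * t) - a ^ 2 * t / 2) *
        ∑' k : ℤ, Real.sqrt (Real.pi / (2 * t)) *
          Real.exp (-((k : ℝ) ^ 2 * Real.pi ^ 2) / (2 * t)) *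
          Real.sinh ((k : ℝ) * Real.pi * a) * Real.sin ((k : ℝ) * Real.pi * x / t) := by
  have hτ : 0 < (I * π / ((2 * t : ℝ) : ℂ)).im := by
    rw [mul_div_assoc, ← ofReal_div, I_mul_im, ofReal_re]
    positivity
  have hL := hasSum_im <|
    (hasSum_cexp_neg_mul_add_sq (s := 2 * t) (by positivity) (x / (2 * t) - a / 2 * I)).mul_left
      (Real.exp (x ^ 2 / (2 * t) - a ^ 2 * t / 2) : ℂ)
  have hR := hasSum_im <|
    (hasSum_jacobiTheta₂_cos (x / (2 * t) - a / 2 * I) hτ).mul_left (√(π / (2 * t)) : ℂ)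
  simp only [im_exp_mul_cexp_neg_mul_add_sq a x ht.ne'] at hL
  simp only [im_sqrt_mul_cexp_mul_cos] at hR
  refine ⟨hL.summable, hR.summable, ?_⟩
  rw [hL.tsum_eq, hR.tsum_eq, im_ofReal_mul]
end

section
/- For every x ∈ ℝ and t > 0, the following Poisson summation identity holds: Σ_{k ∈ ℤ} (x + 2kt) · exp(−2(kx + k²t)) = exp(x²/(2t)) · Σ_{k ∈ ℤ} √(π/(2t)) · exp(−k²π²/(2t)) · kπ · sin(kπx/t), where both series converge absolutely. -/
/-!
Put `z = i x / π` and `τ = 2 i t / π`. Then `exp (-2 (k x + k² t)) = exp (2πi k z + πi k² τ)` is the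
`k`-th term of the Jacobi theta series `θ (z, τ)`, and `x + 2 k t = -(1/2) · 2πi (z + k τ)`, so the
left-hand side is a multiple of `2πi z θ (z, τ) + τ ∂_z θ (z, τ)`. Under the modular transformation
`(z, τ) ↦ (z / τ, -1 / τ)` the `θ` terms of this combination cancel, leaving
`(-iτ)^(-1/2) exp (-πi z² / τ) ∂_z θ (z / τ, -1 / τ)`, whose real part is the sine series.
-/

open Real Complex

theorem mul_jacobiTheta₂_add_mul_jacobiTheta₂'_eq (z τ : ℂ) :
    2 * π * I * z * jacobiTheta₂ z τ + τ * jacobiTheta₂' z τ =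
      1 / (-I * τ) ^ (1 / 2 : ℂ) * cexp (-π * I * z ^ 2 / τ) * jacobiTheta₂' (z / τ) (-1 / τ) := by
  rcases eq_or_ne τ 0 with rfl | hτ
  · simp [jacobiTheta₂'_undef, jacobiTheta₂_undef]
  rw [jacobiTheta₂_functional_equation z τ, jacobiTheta₂'_functional_equation z τ]
  field_simp
  ring

lemma hasSum_shift_mul_jacobiTheta₂_term (z : ℂ) {τ : ℂ} (hτ : 0 < im τ) :
    HasSum (fun n : ℤ ↦ 2 * π * I * (z + n * τ) * jacobiTheta₂_term n z τ)
      (2 * π * I * z * jacobiTheta₂ z τ + τ * jacobiTheta₂' z τ) := by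
  refine (((hasSum_jacobiTheta₂_term z hτ).mul_left (2 * π * I * z)).add
    ((hasSum_jacobiTheta₂'_term z hτ).mul_left τ)).congr_fun fun n ↦ ?_
  rw [jacobiTheta₂'_term]
  ring

lemma jacobiTheta₂_term_ofReal_mul_I (n : ℤ) (u s : ℝ) :
    jacobiTheta₂_term n (u * I) (s * I) = Real.exp (-(2 * π * n * u + π * n ^ 2 * s)) := by
  rw [jacobiTheta₂_term, ofReal_exp]
  congr 1
  push_cast
  ring_nf
  rw [I_sq]
  ring

lemma re_jacobiTheta₂'_term_ofReal (n : ℤ) (u s : ℝ) :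
    (jacobiTheta₂'_term n u (s * I)).re =
      -(2 * π * n * Real.exp (-(π * n ^ 2 * s)) * Real.sin (2 * π * n * u)) := by
  have hexponent : 2 * π * I * n * u + π * I * n ^ 2 * (s * I) =
      ((-(π * n ^ 2 * s) : ℝ) : ℂ) + ((2 * π * n * u : ℝ) : ℂ) * I := by
    push_cast
    ring_nf
    rw [I_sq]
    ring
  rw [jacobiTheta₂'_term, jacobiTheta₂_term, hexponent, Complex.exp_add, exp_mul_I, ← ofReal_exp,
    ← ofReal_cos, ← ofReal_sin]
  simp only [mul_re, mul_im, add_re, add_im, I_re, I_im, ofReal_re, ofReal_im, re_ofNat,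
    im_ofNat, intCast_re, intCast_im]
  ring

lemma hasSum_mul_gaussian_mul_sin (v : ℝ) {r : ℝ} (hr : 0 < r) :
    HasSum (fun n : ℤ ↦ n * Real.exp (-(π * n ^ 2 * r)) * Real.sin (2 * π * n * v))
      (-(jacobiTheta₂' v (r * I)).re / (2 * π)) := by
  have h := (Complex.hasSum_re (hasSum_jacobiTheta₂'_term v (τ := r * I) (by simpa))).div_const
    (-(2 * π))
  rw [div_neg, ← neg_div] at h
  refine h.congr_fun fun n ↦ ?_
  rw [re_jacobiTheta₂'_term_ofReal]
  field_simp

lemma mul_jacobiTheta₂_add_mul_jacobiTheta₂'_ofReal_mul_I (u : ℝ) {s : ℝ} (hs : 0 < s) :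
    2 * π * I * (u * I) * jacobiTheta₂ (u * I) (s * I) + s * I * jacobiTheta₂' (u * I) (s * I) =
      ((√s)⁻¹ * Real.exp (π * u ^ 2 / s) : ℝ) * jacobiTheta₂' (u / s : ℝ) (s⁻¹ * I) := by
  have hs_ne : (s : ℂ) ≠ 0 := ofReal_ne_zero.mpr hs.ne'
  have hC : 1 / (-I * (s * I)) ^ (1 / 2 : ℂ) = ((√s)⁻¹ : ℝ) := by
    rw [show -I * (s * I) = (s : ℂ) by ring_nf; rw [I_sq]; ring, Real.sqrt_eq_rpow,
      ofReal_inv, ofReal_cpow hs.le, one_div]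
    norm_num
  have hE : cexp (-π * I * (u * I) ^ 2 / (s * I)) = Real.exp (π * u ^ 2 / s) := by
    rw [ofReal_exp]
    congr 1
    push_cast
    field_simp
    ring_nf
    rw [I_sq]
    ring
  have hz : u * I / (s * I) = (u / s : ℝ) := by
    push_cast
    field_simp
  have hτ : -1 / (s * I) = (s⁻¹ : ℝ) * I := by
    push_cast
    field_simp
    rw [I_sq]
  rw [mul_jacobiTheta₂_add_mul_jacobiTheta₂'_eq, hC, hE, hz, hτ, ofReal_mul]

lemma hasSum_shift_mul_gaussian (u : ℝ) {s : ℝ} (hs : 0 < s) :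
    HasSum (fun n : ℤ ↦ (u + n * s) * Real.exp (-(2 * π * n * u + π * n ^ 2 * s)))
      (Real.exp (π * u ^ 2 / s) / √s * (-(jacobiTheta₂' (u / s : ℝ) (s⁻¹ * I)).re / (2 * π))) := by
  have h := hasSum_shift_mul_jacobiTheta₂_term (u * I) (τ := s * I) (by simpa)
  rw [mul_jacobiTheta₂_add_mul_jacobiTheta₂'_ofReal_mul_I u hs] at h
  have h := (Complex.hasSum_re h).div_const (-(2 * π))
  rw [re_ofReal_mul] at h
  set R := (jacobiTheta₂' (u / s : ℝ) (s⁻¹ * I)).re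
  rw [show (√s)⁻¹ * Real.exp (π * u ^ 2 / s) * R / -(2 * π) =
    Real.exp (π * u ^ 2 / s) / √s * (-R / (2 * π)) by ring] at h
  refine h.congr_fun fun n ↦ ?_
  have hterm : 2 * π * I * (u * I + n * (s * I)) * jacobiTheta₂_term n (u * I) (s * I) =
      ((-(2 * π) * ((u + n * s) * Real.exp (-(2 * π * n * u + π * n ^ 2 * s))) : ℝ) : ℂ) := by
    rw [jacobiTheta₂_term_ofReal_mul_I]
    push_cast
    ring_nf
    rw [I_sq]
    ring
  rw [hterm, ofReal_re]
  field_simp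

theorem tsum_shift_mul_gaussian_eq (u : ℝ) {s : ℝ} (hs : 0 < s) :
    Summable (fun n : ℤ ↦ (u + n * s) * Real.exp (-(2 * π * n * u + π * n ^ 2 * s))) ∧
    Summable (fun n : ℤ ↦ n * Real.exp (-(π * n ^ 2 * s⁻¹)) * Real.sin (2 * π * n * (u / s))) ∧
    ∑' n : ℤ, (u + n * s) * Real.exp (-(2 * π * n * u + π * n ^ 2 * s)) =
      Real.exp (π * u ^ 2 / s) / √s *
        ∑' n : ℤ, n * Real.exp (-(π * n ^ 2 * s⁻¹)) * Real.sin (2 * π * n * (u / s)) := by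
  have hA := hasSum_shift_mul_gaussian u hs
  have hB := hasSum_mul_gaussian_mul_sin (u / s) (inv_pos.mpr hs)
  exact ⟨hA.summable, hB.summable, by rw [hA.tsum_eq, hB.tsum_eq]⟩

/-- For every `x ∈ ℝ` and `t > 0`, the Poisson summation identity
`Σ_{k ∈ ℤ} (x + 2kt) e^{−2(kx + k²t)}
  = e^{x²/(2t)} Σ_{k ∈ ℤ} √(π/(2t)) e^{−k²π²/(2t)} kπ sin(kπx/t)`
holds, and both series converge absolutely. -/
theorem poisson_summation_phi_zero (x t : ℝ) (ht : 0 < t) :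
    Summable (fun k : ℤ => (x + 2 * (k : ℝ) * t) *
      Real.exp (-2 * ((k : ℝ) * x + (k : ℝ) ^ 2 * t))) ∧
    Summable (fun k : ℤ => Real.sqrt (Real.pi / (2 * t)) *
      Real.exp (-((k : ℝ) ^ 2 * Real.pi ^ 2) / (2 * t)) *
      ((k : ℝ) * Real.pi) * Real.sin ((k : ℝ) * Real.pi * x / t)) ∧
    (∑' k : ℤ, (x + 2 * (k : ℝ) * t) * Real.exp (-2 * ((k : ℝ) * x + (k : ℝ) ^ 2 * t)))
      = Real.exp (x ^ 2 / (2 * t)) *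
        ∑' k : ℤ, Real.sqrt (Real.pi / (2 * t)) *
          Real.exp (-((k : ℝ) ^ 2 * Real.pi ^ 2) / (2 * t)) *
          ((k : ℝ) * Real.pi) * Real.sin ((k : ℝ) * Real.pi * x / t) := by
  obtain ⟨hA, hB, hAB⟩ := tsum_shift_mul_gaussian_eq (x / π) (s := 2 * t / π) (by positivity)
  have hL : (fun k : ℤ ↦ (x + 2 * (k : ℝ) * t) * Real.exp (-2 * ((k : ℝ) * x + (k : ℝ) ^ 2 * t))) =
      fun k : ℤ ↦ π * ((x / π + k * (2 * t / π)) *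
        Real.exp (-(2 * π * k * (x / π) + π * k ^ 2 * (2 * t / π)))) := by
    funext k
    field_simp
  have hR : (fun k : ℤ ↦ √(π / (2 * t)) * Real.exp (-((k : ℝ) ^ 2 * π ^ 2) / (2 * t)) *
        ((k : ℝ) * π) * Real.sin ((k : ℝ) * π * x / t)) =
      fun k : ℤ ↦ π * √(π / (2 * t)) * (k * Real.exp (-(π * k ^ 2 * (2 * t / π)⁻¹)) *
        Real.sin (2 * π * k * (x / π / (2 * t / π)))) := by
    funext k
    field_simp
  have hsqrt : Real.exp (π * (x / π) ^ 2 / (2 * t / π)) / √(2 * t / π) =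
      Real.exp (x ^ 2 / (2 * t)) * √(π / (2 * t)) := by
    rw [div_eq_mul_inv, ← Real.sqrt_inv, inv_div]
    congr 2
    field_simp
  rw [hL, hR]
  refine ⟨hA.mul_left π, hB.mul_left _, ?_⟩
  rw [tsum_mul_left, tsum_mul_left, hAB, hsqrt]
  ring
end

section
/- For every x ∈ ℝ and t > 0, the identity (1/√(πt)) · Σ_{n ∈ ℤ} (1/t)·(n + x) · exp(−(n + x)²/t) = Σ_{n ∈ ℤ} nπ · sin(2nπx) · exp(−n²π²t) holds, where both series converge absolutely. (This is obtained by differentiating the Jacobi theta identity (1/√(πt)) Σ_{n ∈ ℤ} exp(−(n+x)²/t) = Σ_{n ∈ ℤ} cos(2nπx) exp(−n²π²t) in x.) -/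
open Real Filter

open Complex in
lemma hasSum_int_sinKernel_real (a : ℝ) {t : ℝ} (ht : 0 < t) :
    HasSum (fun n : ℤ => (n : ℝ) * Real.sin (2 * Real.pi * a * n) * Real.exp (-Real.pi * n ^ 2 * t))
      (HurwitzZeta.sinKernel a t) := by
  have h := (HurwitzZeta.hasSum_int_sinKernel a ht).mapL Complex.reCLM
  simp only [Complex.reCLM_apply, Complex.ofReal_re] at h
  refine h.congr_fun fun n => ?_
  have e1 : (-Complex.I * (n:ℂ) * Complex.exp (2 * (Real.pi:ℂ) * Complex.I * (a:ℂ) * (n:ℂ)) *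
      ((Real.exp (-Real.pi * n ^ 2 * t) : ℝ) : ℂ))
      = ((n:ℂ) * ((Real.exp (-Real.pi * n ^ 2 * t) : ℝ) : ℂ) *
          Complex.exp (((2 * Real.pi * a * n : ℝ) : ℂ) * Complex.I)) * Complex.I * (-1) := by
    push_cast; ring_nf
  rw [e1]
  simp only [mul_neg_one, Complex.neg_re, Complex.mul_I_re, Complex.exp_mul_I, neg_neg,
    Complex.mul_im, Complex.add_re, Complex.add_im, Complex.ofReal_re, Complex.ofReal_im,
    Complex.cos_ofReal_re, Complex.cos_ofReal_im, Complex.sin_ofReal_re, Complex.sin_ofReal_im,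
    Complex.mul_I_im, Complex.mul_re, Complex.intCast_re, Complex.intCast_im, Complex.I_re, Complex.I_im]
  ring

/-- For every `x ∈ ℝ` and `t > 0`, the identity
`(1/√(πt)) Σ_{n ∈ ℤ} (1/t)(n + x) e^{−(n+x)²/t} = Σ_{n ∈ ℤ} nπ sin(2nπx) e^{−n²π²t}`
holds, and both series converge absolutely. -/
theorem jacobi_theta_derivative_identity (x t : ℝ) (ht : 0 < t) :
    Summable (fun n : ℤ => (1 / t) * ((n : ℝ) + x) * Real.exp (-((n : ℝ) + x) ^ 2 / t)) ∧
    Summable (fun n : ℤ => (n : ℝ) * Real.pi * Real.sin (2 * (n : ℝ) * Real.pi * x) *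
      Real.exp (-(n : ℝ) ^ 2 * Real.pi ^ 2 * t)) ∧
    (1 / Real.sqrt (Real.pi * t)) *
        ∑' n : ℤ, (1 / t) * ((n : ℝ) + x) * Real.exp (-((n : ℝ) + x) ^ 2 / t)
      = ∑' n : ℤ, (n : ℝ) * Real.pi * Real.sin (2 * (n : ℝ) * Real.pi * x) *
          Real.exp (-(n : ℝ) ^ 2 * Real.pi ^ 2 * t) := by
  have hπt : (0:ℝ) < Real.pi * t := mul_pos Real.pi_pos ht
  have hs : (0:ℝ) < 1 / (Real.pi * t) := by positivity
  -- odd kernel sum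
  have h1 : HasSum (fun n : ℤ => (1 / t) * ((n : ℝ) + x) * Real.exp (-((n : ℝ) + x) ^ 2 / t))
      ((1 / t) * HurwitzZeta.oddKernel x (1 / (Real.pi * t))) := by
    refine ((HurwitzZeta.hasSum_int_oddKernel x hs).mul_left (1 / t)).congr_fun fun n => ?_
    rw [mul_assoc]
    congr 2
    congr 1
    rw [mul_one_div, div_eq_div_iff (by positivity) hπt.ne']
    ring
  -- sin kernel sum
  have h2 : HasSum (fun n : ℤ => (n : ℝ) * Real.pi * Real.sin (2 * (n : ℝ) * Real.pi * x) *
      Real.exp (-(n : ℝ) ^ 2 * Real.pi ^ 2 * t))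
      (Real.pi * HurwitzZeta.sinKernel x (Real.pi * t)) := by
    refine ((hasSum_int_sinKernel_real x hπt).mul_left Real.pi).congr_fun fun n => ?_
    rw [show 2 * Real.pi * x * (n:ℝ) = 2 * (n:ℝ) * Real.pi * x by ring,
      show -Real.pi * (n:ℝ) ^ 2 * (Real.pi * t) = -(n:ℝ) ^ 2 * Real.pi ^ 2 * t by ring]
    ring
  refine ⟨h1.summable, h2.summable, ?_⟩
  rw [h1.tsum_eq, h2.tsum_eq,
    HurwitzZeta.oddKernel_functional_equation x (1 / (Real.pi * t)), one_div_one_div]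
  have key : (1 / (1 / (Real.pi * t)) ^ ((3:ℝ)/2) : ℝ)
      = (Real.pi * t) * Real.sqrt (Real.pi * t) := by
    rw [one_div (Real.pi * t : ℝ), Real.inv_rpow hπt.le, one_div, inv_inv,
      show ((3:ℝ)/2) = 1 + 1/2 by norm_num, Real.rpow_add hπt, Real.rpow_one,
      Real.sqrt_eq_rpow]
  rw [key]
  have hst : Real.sqrt (Real.pi * t) ≠ 0 := (Real.sqrt_pos.mpr hπt).ne'
  have hsq : Real.sqrt (Real.pi * t) * Real.sqrt (Real.pi * t) = Real.pi * t :=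
    Real.mul_self_sqrt hπt.le
  field_simp
end

section
/- For every x ∈ ℝ and t > 0, φ_a(x,t) converges to φ_0(x,t) as a → 0 (with a ≠ 0). -/
/-
For fixed `k`, `sin (a (x + 2kt)) / a → x + 2kt` and `a π / sinh (a π) → 1` as `a → 0`. Since
`|sin (a y) / a| ≤ |y|`, the terms of the rescaled series are dominated, uniformly in `a`, by
`|x + 2kt| e^{−2(kx + k²t)}`, which is summable because of the Gaussian factor `e^{−2k²t}`;
Tannery's theorem then passes the limit inside the sum.
-/

open Real Filter

open Topology

lemma summable_phi0_majorant (x : ℝ) {t : ℝ} (ht : 0 < t) :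
    Summable fun k : ℤ => |x + 2 * k * t| * exp (-2 * (k * x + k ^ 2 * t)) := by
  -- the Jacobi theta bound `|k|ⁿ e^{−π(T k² − 2S|k|)}` with `T = 2t/π`, `S = |x|/π`, for `n = 0, 1`
  have hT : 0 < 2 * t / π := by positivity
  refine .of_nonneg_of_le (fun k => by positivity) (fun k => ?_)
    (((summable_pow_mul_jacobiTheta₂_term_bound (|x| / π) hT 0).mul_left |x|).add
      ((summable_pow_mul_jacobiTheta₂_term_bound (|x| / π) hT 1).mul_left (2 * t)))
  have hexponent : -π * (2 * t / π * k ^ 2 - 2 * (|x| / π) * |(k : ℝ)|) =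
      2 * |x| * |(k : ℝ)| - 2 * t * k ^ 2 := by
    field_simp
    ring
  simp only [Int.cast_abs, pow_zero, pow_one, one_mul, hexponent, ← mul_assoc, ← add_mul]
  gcongr
  · calc |x + 2 * k * t| ≤ |x| + |2 * k * t| := abs_add_le _ _
      _ = |x| + 2 * t * |(k : ℝ)| := by rw [abs_mul, abs_mul, abs_two, abs_of_pos ht]; ring
  · nlinarith [neg_abs_le (k * x), abs_mul (k : ℝ) x]

lemma HasDerivAt.tendsto_div_self {𝕜 : Type*} [NontriviallyNormedField 𝕜] {f : 𝕜 → 𝕜} {c : 𝕜}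
    (hf : HasDerivAt f c 0) (h0 : f 0 = 0) : Tendsto (fun a => f a / a) (𝓝[≠] 0) (𝓝 c) := by
  rw [hasDerivAt_iff_tendsto_slope] at hf
  exact hf.congr fun a => by simp [slope_def_field, h0]

lemma tendsto_sin_mul_div_self (c : ℝ) : Tendsto (fun a => sin (a * c) / a) (𝓝[≠] 0) (𝓝 c) :=
  by simpa using ((hasDerivAt_mul_const (x := 0) c).sin).tendsto_div_self (by simp)

lemma tendsto_sinh_mul_div_self (c : ℝ) : Tendsto (fun a => sinh (a * c) / a) (𝓝[≠] 0) (𝓝 c) :=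
  by simpa using ((hasDerivAt_mul_const (x := 0) c).sinh).tendsto_div_self (by simp)

lemma abs_sin_mul_div_self_le (a y : ℝ) : |sin (a * y) / a| ≤ |y| := by
  rcases eq_or_ne a 0 with rfl | ha
  · simp
  rw [abs_div, div_le_iff₀ (abs_pos.2 ha), ← abs_mul, mul_comm y]
  exact abs_sin_le_abs

/-- For every `x ∈ ℝ` and `t > 0`, `φ_a(x,t)` converges to `φ_0(x,t)` as `a → 0`, `a ≠ 0`. -/
theorem phi_tendsto_phi0 (x t : ℝ) (ht : 0 < t) :
    Tendsto (fun a : ℝ => phi a x t) (nhdsWithin 0 {(0 : ℝ)}ᶜ) (nhds (phi0 x t)) := by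
  set e : ℤ → ℝ := fun k => exp (-2 * (k * x + k ^ 2 * t))
  have hseries : Tendsto (fun a => ∑' k : ℤ, sin (a * (x + 2 * k * t)) / a * e k)
      (𝓝[≠] 0) (𝓝 (phi0 x t)) :=
    tendsto_tsum_of_dominated_convergence (summable_phi0_majorant x ht)
      (fun k => (tendsto_sin_mul_div_self _).mul_const _)
      (.of_forall fun a k => by
        rw [norm_mul, norm_of_nonneg (exp_pos _).le]
        exact mul_le_mul_of_nonneg_right (abs_sin_mul_div_self_le a _) (exp_pos _).le)
  have hprefactor : Tendsto (fun a => π / (sinh (a * π) / a)) (𝓝[≠] 0) (𝓝 1) := by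
    simpa only [div_self pi_ne_zero, Pi.div_def] using
      (tendsto_const_nhds (x := π)).div (tendsto_sinh_mul_div_self π) pi_ne_zero
  refine (one_mul (phi0 x t) ▸ hprefactor.mul hseries).congr' ?_
  filter_upwards [self_mem_nhdsWithin] with a (ha : a ≠ 0)
  have hterm (k : ℤ) :
      sin (a * (x + 2 * k * t)) / a * e k = a⁻¹ * (sin (a * x + 2 * k * a * t) * e k) := by
    ring_nf
  rw [tsum_congr hterm, tsum_mul_left, phi, div_div_eq_mul_div, mul_div_right_comm, mul_assoc,
    mul_inv_cancel_left₀ ha]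
end

section
/- For every a ∈ ℝ, the limit as n → ∞ (over positive integers n) of the quotient [Σ_{k ∈ ℤ} sin((a/n)·(1 + 8k)) · exp(−(2/n)·(k + 4k²))] / [(1/n) · Σ_{k ∈ ℤ} (1 + 8k) · exp(−(2/n)·(k + 4k²))] equals sinh(aπ)/π. -/
/-!
With `τ = 8i/(πu)` and `z = (4a + i)/(πu)`, the numerator is the imaginary part of
`e^{ia/u} θ(z, τ)` and the denominator is the real part of `θ(z₀, τ) + (4/(πi)) θ'(z₀, τ)`,
`z₀ = i/(πu)`, where `θ` is Jacobi's theta function and `θ'` its `z`-derivative; the factor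
`1 + 8k` comes from `θ'` bringing down `2πik`. The modular transformation `τ ↦ -1/τ = iπu/8`
rewrites both as theta series in the nome `q = e^{-π²u/8}`: up to a common positive factor, the
quotient becomes `e^{-2a²/u} Σ sin(πm/4) e^{πam} q^{m²} / (π Σ m sin(πm/4) q^{m²})`.
As `u → ∞`, `q → 0` and only the terms `m = ±1` survive, leaving `√2 sinh(πa) / (π √2)`.
-/

open Real Filter Complex Topology

lemma cexp_mul_jacobiTheta₂_term (a u : ℝ) (k : ℤ) :
    cexp (a / u * I) * jacobiTheta₂_term k ((4 * a + I) / (π * u)) (8 * I / (π * u)) =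
      rexp (-(2 / u) * (k + 4 * k ^ 2)) * cexp ((a / u * (1 + 8 * k) : ℝ) * I) := by
  have hπ : (π : ℂ) ≠ 0 := ofReal_ne_zero.2 pi_ne_zero
  rw [jacobiTheta₂_term, ofReal_exp, ← Complex.exp_add, ← Complex.exp_add]
  congr 1
  push_cast
  field_simp
  ring_nf
  rw [I_sq]
  ring

lemma jacobiTheta₂_term_add_jacobiTheta₂'_term (k : ℤ) (z τ : ℂ) :
    jacobiTheta₂_term k z τ + 4 / (π * I) * jacobiTheta₂'_term k z τ =
      (1 + 8 * k) * jacobiTheta₂_term k z τ := by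
  have hπ : (π : ℂ) ≠ 0 := ofReal_ne_zero.2 pi_ne_zero
  rw [jacobiTheta₂'_term]
  field_simp
  ring

lemma im_eight_mul_I_div_pos {u : ℝ} (hu : 0 < u) : 0 < (8 * I / (π * u)).im := by
  have : (8 * I / (π * u) : ℂ) = ((8 / (π * u) : ℝ) : ℂ) * I := by push_cast; ring
  rw [this, im_ofReal_mul, I_im, mul_one]
  positivity

lemma hasSum_sin_mul_exp (a : ℝ) {u : ℝ} (hu : 0 < u) :
    HasSum (fun k : ℤ => Real.sin (a / u * (1 + 8 * k)) * rexp (-(2 / u) * (k + 4 * k ^ 2)))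
      (cexp (a / u * I) * jacobiTheta₂ ((4 * a + I) / (π * u)) (8 * I / (π * u))).im := by
  have h := Complex.hasSum_im <|
    (hasSum_jacobiTheta₂_term ((4 * a + I) / (π * u)) (im_eight_mul_I_div_pos hu)).mul_left
      (cexp (a / u * I))
  refine h.congr_fun fun k => ?_
  simp only [cexp_mul_jacobiTheta₂_term, im_ofReal_mul, exp_ofReal_mul_I_im]
  ring

lemma hasSum_one_add_eight_mul_mul_exp {u : ℝ} (hu : 0 < u) :
    HasSum (fun k : ℤ => (1 + 8 * k) * rexp (-(2 / u) * (k + 4 * k ^ 2)))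
      (jacobiTheta₂ (I / (π * u)) (8 * I / (π * u)) +
        4 / (π * I) * jacobiTheta₂' (I / (π * u)) (8 * I / (π * u))).re := by
  have hτ := im_eight_mul_I_div_pos hu
  have h := Complex.hasSum_re <| (hasSum_jacobiTheta₂_term (I / (π * u)) hτ).add
    ((hasSum_jacobiTheta₂'_term (I / (π * u)) hτ).mul_left (4 / (π * I)))
  refine h.congr_fun fun k => ?_
  have hk := cexp_mul_jacobiTheta₂_term 0 u k
  simp only [ofReal_zero, zero_div, zero_mul, Complex.exp_zero, one_mul, mul_zero, zero_add,
    mul_one] at hk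
  rw [jacobiTheta₂_term_add_jacobiTheta₂'_term, hk,
    show (1 + 8 * k : ℂ) = ((1 + 8 * k : ℝ) : ℂ) by push_cast; ring, ← ofReal_mul, ofReal_re]

lemma one_div_neg_I_mul_cpow_half {u : ℝ} (hu : 0 < u) :
    1 / (-I * (8 * I / (π * u))) ^ (1 / 2 : ℂ) = ((√(8 / (π * u)))⁻¹ : ℝ) := by
  have h : -I * (8 * I / (π * u)) = ((8 / (π * u) : ℝ) : ℂ) := by
    push_cast
    ring_nf
    rw [I_sq]
    ring
  rw [h, show (1 / 2 : ℂ) = ((1 / 2 : ℝ) : ℂ) by norm_num, ← ofReal_cpow (by positivity),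
    ← sqrt_eq_rpow, one_div, ofReal_inv]

lemma neg_one_div_eight_mul_I_div {u : ℝ} (hu : 0 < u) :
    -1 / (8 * I / (π * u)) = ((π * u / 8 : ℝ) : ℂ) * I := by
  have hπ : (π : ℂ) ≠ 0 := ofReal_ne_zero.2 pi_ne_zero
  have hu' : (u : ℂ) ≠ 0 := ofReal_ne_zero.2 hu.ne'
  push_cast
  field_simp
  ring_nf
  rw [I_sq]

lemma cexp_mul_jacobiTheta₂_eq (a : ℝ) {u : ℝ} (hu : 0 < u) :
    cexp (a / u * I) * jacobiTheta₂ ((4 * a + I) / (π * u)) (8 * I / (π * u)) =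
      ((√(8 / (π * u)))⁻¹ * rexp ((1 - 16 * a ^ 2) / (8 * u)) : ℝ) *
        jacobiTheta₂ (1 / 8 - a / 2 * I) ((π * u / 8 : ℝ) * I) := by
  have hπ : (π : ℂ) ≠ 0 := ofReal_ne_zero.2 pi_ne_zero
  have hu' : (u : ℂ) ≠ 0 := ofReal_ne_zero.2 hu.ne'
  have hz : (4 * a + I) / (π * u) / (8 * I / (π * u)) = 1 / 8 - a / 2 * I := by
    field_simp
    ring_nf
    rw [I_sq]
    ring
  have he : cexp (a / u * I) * cexp (-π * I * ((4 * a + I) / (π * u)) ^ 2 / (8 * I / (π * u))) =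
      (rexp ((1 - 16 * a ^ 2) / (8 * u)) : ℂ) := by
    rw [ofReal_exp, ← Complex.exp_add]
    congr 1
    push_cast
    field_simp
    ring_nf
    rw [I_sq]
    ring
  rw [jacobiTheta₂_functional_equation, hz, neg_one_div_eight_mul_I_div hu,
    one_div_neg_I_mul_cpow_half hu, ofReal_mul, ← he]
  ring

lemma jacobiTheta₂_add_jacobiTheta₂'_eq {u : ℝ} (hu : 0 < u) :
    jacobiTheta₂ (I / (π * u)) (8 * I / (π * u)) +
        4 / (π * I) * jacobiTheta₂' (I / (π * u)) (8 * I / (π * u)) =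
      (-(u / 2) * (√(8 / (π * u)))⁻¹ * rexp (1 / (8 * u)) : ℝ) *
        jacobiTheta₂' (1 / 8) ((π * u / 8 : ℝ) * I) := by
  have hπ : (π : ℂ) ≠ 0 := ofReal_ne_zero.2 pi_ne_zero
  have hu' : (u : ℂ) ≠ 0 := ofReal_ne_zero.2 hu.ne'
  have hz : I / (π * u) / (8 * I / (π * u)) = 1 / 8 := by
    field_simp
  have he : cexp (-π * I * (I / (π * u)) ^ 2 / (8 * I / (π * u))) =
      (rexp (1 / (8 * u)) : ℂ) := by
    rw [ofReal_exp]
    congr 1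
    push_cast
    field_simp
    ring_nf
    rw [I_sq]
    ring
  rw [jacobiTheta₂_functional_equation, jacobiTheta₂'_functional_equation, hz,
    neg_one_div_eight_mul_I_div hu, one_div_neg_I_mul_cpow_half hu, he]
  push_cast
  field_simp
  ring_nf
  rw [I_sq]
  ring

lemma jacobiTheta₂_term_eighth (a t : ℝ) (m : ℤ) :
    jacobiTheta₂_term m (1 / 8 - a / 2 * I) (t * I) =
      rexp (π * a * m) * rexp (-(π * t) * m ^ 2) * cexp ((π * m / 4 : ℝ) * I) := by
  rw [jacobiTheta₂_term, ofReal_exp, ofReal_exp, ← Complex.exp_add, ← Complex.exp_add]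
  congr 1
  push_cast
  ring_nf
  rw [I_sq]
  ring

lemma hasSum_im_jacobiTheta₂_eighth (a : ℝ) {t : ℝ} (ht : 0 < t) :
    HasSum (fun m : ℤ => Real.sin (π * m / 4) * rexp (π * a * m) * rexp (-(π * t) * m ^ 2))
      (jacobiTheta₂ (1 / 8 - a / 2 * I) (t * I)).im := by
  have h := Complex.hasSum_im <| hasSum_jacobiTheta₂_term (1 / 8 - a / 2 * I)
    (τ := t * I) (by simpa using ht)
  refine h.congr_fun fun m => ?_
  rw [jacobiTheta₂_term_eighth, ← ofReal_mul, im_ofReal_mul, exp_ofReal_mul_I_im]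
  ring

lemma hasSum_re_jacobiTheta₂'_eighth {t : ℝ} (ht : 0 < t) :
    HasSum (fun m : ℤ => m * Real.sin (π * m / 4) * rexp (-(π * t) * m ^ 2))
      (-(jacobiTheta₂' (1 / 8) (t * I)).re / (2 * π)) := by
  have h := (Complex.hasSum_re <| hasSum_jacobiTheta₂'_term (1 / 8)
    (τ := t * I) (by simpa using ht)).neg.div_const (2 * π)
  refine h.congr_fun fun m => ?_
  have hm := jacobiTheta₂_term_eighth 0 t m
  simp only [ofReal_zero, zero_div, zero_mul, sub_zero, mul_zero, Real.exp_zero, ofReal_one,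
    one_mul] at hm
  rw [jacobiTheta₂'_term, hm]
  simp only [mul_re, mul_im, ofReal_re, ofReal_im, I_re, I_im, exp_ofReal_mul_I_re,
    exp_ofReal_mul_I_im, re_ofNat, im_ofNat, intCast_re, intCast_im]
  field_simp
  ring

lemma quotient_eq_exp_mul_div (a : ℝ) {u : ℝ} (hu : 0 < u) :
    (∑' k : ℤ, Real.sin (a / u * (1 + 8 * k)) * rexp (-(2 / u) * (k + 4 * k ^ 2))) /
        ((1 / u) * ∑' k : ℤ, (1 + 8 * k) * rexp (-(2 / u) * (k + 4 * k ^ 2))) =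
      rexp (-(2 * a ^ 2 / u)) *
        ((∑' m : ℤ, Real.sin (π * m / 4) * rexp (π * a * m) * rexp (-(π * (π * u / 8)) * m ^ 2)) /
          (π * ∑' m : ℤ, m * Real.sin (π * m / 4) * rexp (-(π * (π * u / 8)) * m ^ 2))) := by
  have ht : 0 < π * u / 8 := by positivity
  rw [(hasSum_sin_mul_exp a hu).tsum_eq, (hasSum_one_add_eight_mul_mul_exp hu).tsum_eq,
    cexp_mul_jacobiTheta₂_eq a hu, jacobiTheta₂_add_jacobiTheta₂'_eq hu, im_ofReal_mul,
    re_ofReal_mul, (hasSum_im_jacobiTheta₂_eighth a ht).tsum_eq,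
    (hasSum_re_jacobiTheta₂'_eighth ht).tsum_eq]
  have hE : rexp ((1 - 16 * a ^ 2) / (8 * u)) = rexp (-(2 * a ^ 2 / u)) * rexp (1 / (8 * u)) := by
    rw [← Real.exp_add]
    congr 1
    field_simp
    ring
  have hK : (√(8 / (π * u)))⁻¹ ≠ 0 := inv_ne_zero (Real.sqrt_pos.2 (by positivity)).ne'
  rw [hE]
  field_simp

lemma one_le_intCast_sq {m : ℤ} (hm : m ≠ 0) : 1 ≤ (m : ℝ) ^ 2 := by
  rw [one_le_sq_iff_one_le_abs, ← Int.cast_abs]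
  exact_mod_cast Int.one_le_abs hm

lemma tendsto_exp_neg_mul_sq_sub_one {m : ℤ} (hm : m ≠ 0) :
    Tendsto (fun s : ℝ => rexp (-s * (m ^ 2 - 1))) atTop
      (𝓝 (if m = 1 ∨ m = -1 then 1 else 0)) := by
  split_ifs with h
  · have h1 : (m : ℝ) ^ 2 - 1 = 0 := by rcases h with rfl | rfl <;> norm_num
    simp [h1]
  · have h1 : 1 < (m : ℝ) ^ 2 := by
      rw [one_lt_sq_iff_one_lt_abs, ← Int.cast_abs]
      exact_mod_cast (by rw [lt_abs]; omega : 1 < |m|)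
    exact tendsto_exp_atBot.comp (tendsto_neg_atTop_atBot.atBot_mul_const (by linarith))

lemma tendsto_exp_mul_tsum_mul_exp_neg_sq {c : ℤ → ℝ} (hc0 : c 0 = 0) {s₀ : ℝ}
    (hs₀ : Summable fun m : ℤ => c m * rexp (-s₀ * m ^ 2)) :
    Tendsto (fun s => rexp s * ∑' m : ℤ, c m * rexp (-s * m ^ 2)) atTop (𝓝 (c 1 + c (-1))) := by
  have hshift : ∀ s : ℝ, rexp s * ∑' m : ℤ, c m * rexp (-s * m ^ 2) =
      ∑' m : ℤ, c m * rexp (-s * (m ^ 2 - 1)) := fun s => by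
    rw [← tsum_mul_left]
    refine tsum_congr fun m => ?_
    rw [mul_left_comm, ← Real.exp_add]
    ring_nf
  have hlimit : ∑' m : ℤ, c m * (if m = 1 ∨ m = -1 then 1 else 0) = c 1 + c (-1) := by
    rw [tsum_eq_sum (s := {1, -1}) fun m hm => by simp_all]
    simp
  simp only [hshift, ← hlimit]
  refine tendsto_tsum_of_dominated_convergence
    (bound := fun m => |c m| * rexp (-s₀ * (m ^ 2 - 1))) ?_ (fun m => ?_) ?_
  · refine (hs₀.abs.mul_right (rexp s₀)).congr fun m => ?_
    rw [abs_mul, Real.abs_exp, mul_assoc, ← Real.exp_add]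
    ring_nf
  · rcases eq_or_ne m 0 with rfl | hm
    · simp only [hc0, zero_mul]
      exact tendsto_const_nhds
    · exact (tendsto_exp_neg_mul_sq_sub_one hm).const_mul (c m)
  · filter_upwards [eventually_ge_atTop s₀] with s hs m
    rw [norm_mul, Real.norm_eq_abs, Real.norm_eq_abs, Real.abs_exp]
    rcases eq_or_ne m 0 with rfl | hm
    · simp [hc0]
    · gcongr
      nlinarith [one_le_intCast_sq hm]

lemma tendsto_theta_quotient (a : ℝ) :
    Tendsto (fun s : ℝ => (∑' m : ℤ, Real.sin (π * m / 4) * rexp (π * a * m) * rexp (-s * m ^ 2)) /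
        (π * ∑' m : ℤ, m * Real.sin (π * m / 4) * rexp (-s * m ^ 2))) atTop
      (𝓝 (Real.sinh (a * π) / π)) := by
  have ht : (0 : ℝ) < π / 8 := by positivity
  have hA := tendsto_exp_mul_tsum_mul_exp_neg_sq
    (c := fun m => Real.sin (π * m / 4) * rexp (π * a * m)) (by simp)
    (hasSum_im_jacobiTheta₂_eighth a ht).summable
  have hB := tendsto_exp_mul_tsum_mul_exp_neg_sq (c := fun m => m * Real.sin (π * m / 4))
    (by simp) (hasSum_re_jacobiTheta₂'_eighth ht).summable
  simp only [Int.cast_one, Int.cast_neg, mul_one, mul_neg_one, neg_div, Real.sin_neg,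
    sin_pi_div_four, one_mul, neg_one_mul, neg_neg] at hA hB
  have hlim := hA.div (hB.const_mul π) (by positivity)
  rw [show (√2 / 2 * rexp (π * a) + -(√2 / 2) * rexp (-(π * a))) / (π * (√2 / 2 + √2 / 2)) =
      Real.sinh (a * π) / π by rw [Real.sinh_eq]; field_simp; ring_nf] at hlim
  refine hlim.congr fun s => ?_
  change rexp s * _ / (π * (rexp s * _)) = _
  rw [mul_left_comm, mul_div_mul_left _ _ (Real.exp_pos s).ne']

/-- For every `a ∈ ℝ`, as `n → ∞` over positive integers,
`[Σ_{k ∈ ℤ} sin((a/n)(1 + 8k)) e^{−(2/n)(k + 4k²)}] / [(1/n) Σ_{k ∈ ℤ} (1 + 8k) e^{−(2/n)(k + 4k²)}]`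
converges to `sinh(aπ)/π`. -/
theorem quotient_tendsto_sinh (a : ℝ) :
    Tendsto (fun n : ℕ =>
        (∑' k : ℤ, Real.sin ((a / (n : ℝ)) * (1 + 8 * (k : ℝ))) *
            Real.exp (-(2 / (n : ℝ)) * ((k : ℝ) + 4 * (k : ℝ) ^ 2))) /
          ((1 / (n : ℝ)) * ∑' k : ℤ, (1 + 8 * (k : ℝ)) *
            Real.exp (-(2 / (n : ℝ)) * ((k : ℝ) + 4 * (k : ℝ) ^ 2))))
      atTop (nhds (Real.sinh (a * Real.pi) / Real.pi)) := by
  have hs : Tendsto (fun n : ℕ => π * (π * n / 8)) atTop atTop :=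
    ((tendsto_natCast_atTop_atTop.const_mul_atTop pi_pos).atTop_div_const
      (by norm_num : (0 : ℝ) < 8)).const_mul_atTop pi_pos
  have hexp : Tendsto (fun n : ℕ => rexp (-(2 * a ^ 2 / n))) atTop (𝓝 1) := by
    simpa using ((tendsto_const_div_atTop_nhds_zero_nat (2 * a ^ 2)).neg).rexp
  have hlim := hexp.mul ((tendsto_theta_quotient a).comp hs)
  rw [one_mul] at hlim
  refine hlim.congr' ?_
  filter_upwards [eventually_gt_atTop 0] with n hn
  exact (quotient_eq_exp_mul_div a (Nat.cast_pos.2 hn)).symm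
end

section
/- For every t > 0, the function x ↦ φ_0(x,t) is infinitely differentiable (C^∞) on ℝ. -/
open Real Filter

noncomputable def phiC (t : ℝ) (z : ℂ) : ℂ :=
  ∑' k : ℤ, (z + 2 * (k : ℂ) * (t : ℂ)) * Complex.exp (-2 * ((k : ℂ) * z + (k : ℂ) ^ 2 * (t : ℂ)))

lemma summable_bound (t : ℝ) (ht : 0 < t) (M : ℝ) :
    Summable (fun k : ℤ => (M + 2 * |(k : ℝ)| * t) *
      Real.exp (2 * |(k : ℝ)| * M - 2 * (k : ℝ) ^ 2 * t)) := by
  have hT : 0 < 2 * t / π := by positivity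
  have h := ((summable_pow_mul_jacobiTheta₂_term_bound (M / π) hT 0).mul_left M).add
    ((summable_pow_mul_jacobiTheta₂_term_bound (M / π) hT 1).mul_left (2 * t))
  refine h.congr fun k => ?_
  have hπ : (π : ℝ) ≠ 0 := Real.pi_ne_zero
  have h1 : -π * (2 * t / π * (k : ℝ) ^ 2 - 2 * (M / π) * |(k : ℝ)|)
      = 2 * |(k : ℝ)| * M - 2 * (k : ℝ) ^ 2 * t := by field_simp; ring
  push_cast
  rw [h1]
  ring

lemma term_bound (t : ℝ) (ht : 0 < t) (M : ℝ) (k : ℤ) (z : ℂ) (hz : ‖z‖ ≤ M) :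
    ‖(z + 2 * (k : ℂ) * (t : ℂ)) * Complex.exp (-2 * ((k : ℂ) * z + (k : ℂ) ^ 2 * (t : ℂ)))‖
      ≤ (M + 2 * |(k : ℝ)| * t) * Real.exp (2 * |(k : ℝ)| * M - 2 * (k : ℝ) ^ 2 * t) := by
  rw [norm_mul, Complex.norm_exp]
  have hre : (-2 * ((k : ℂ) * z + (k : ℂ) ^ 2 * (t : ℂ))).re
      = -2 * ((k : ℝ) * z.re + (k : ℝ) ^ 2 * t) := by
    have h : (-2 * ((k : ℂ) * z + (k : ℂ) ^ 2 * (t : ℂ)))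
        = (((-2 * (k : ℝ)) : ℝ) : ℂ) * z + (((-2 * (k : ℝ) ^ 2 * t) : ℝ) : ℂ) := by
      push_cast; ring
    rw [h, Complex.add_re, Complex.ofReal_re, Complex.re_ofReal_mul]
    ring
  have h2 : (-2 * ((k : ℂ) * z + (k : ℂ) ^ 2 * (t : ℂ))).re
      ≤ 2 * |(k : ℝ)| * M - 2 * (k : ℝ) ^ 2 * t := by
    rw [hre]
    have : -((k : ℝ) * z.re) ≤ |(k : ℝ)| * M := by
      calc -((k : ℝ) * z.re) ≤ |(k : ℝ) * z.re| := neg_le_abs _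
        _ = |(k : ℝ)| * |z.re| := abs_mul _ _
        _ ≤ |(k : ℝ)| * M := by
            refine mul_le_mul_of_nonneg_left ?_ (abs_nonneg _)
            exact (Complex.abs_re_le_norm z).trans hz
    nlinarith
  have h1 : ‖z + 2 * (k : ℂ) * (t : ℂ)‖ ≤ M + 2 * |(k : ℝ)| * t := by
    refine (norm_add_le _ _).trans (add_le_add hz ?_)
    rw [show (2 * (k : ℂ) * (t : ℂ)) = ((2 * (k : ℝ) * t : ℝ) : ℂ) by push_cast; ring,
      Complex.norm_real, Real.norm_eq_abs]
    rw [abs_mul, abs_mul, abs_two, abs_of_pos ht]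
  have hM0 : 0 ≤ M := le_trans (norm_nonneg z) hz
  exact mul_le_mul h1 (Real.exp_le_exp.2 h2) (Real.exp_pos _).le (by positivity)

lemma phiC_diff (t : ℝ) (ht : 0 < t) : Differentiable ℂ (phiC t) := by
  intro z₀
  set M : ℝ := ‖z₀‖ + 1 with hM
  have hU : IsOpen (Metric.ball (0 : ℂ) M) := Metric.isOpen_ball
  have hmem : z₀ ∈ Metric.ball (0 : ℂ) M := by
    simp [Metric.mem_ball, hM]
  have hd := Complex.differentiableOn_tsum_of_summable_norm (summable_bound t ht M)
    (fun k : ℤ => ((differentiable_id.add (differentiable_const _)).mul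
      ((Complex.differentiable_exp.comp ((differentiable_const _).mul
        ((differentiable_const _).mul differentiable_id |>.add (differentiable_const _)))))).differentiableOn)
    hU (fun k w hw => term_bound t ht M k w (mem_ball_zero_iff.mp hw).le)
  exact (hd.differentiableAt (hU.mem_nhds hmem))

lemma phi0_eq_re (x t : ℝ) : phi0 x t = (phiC t (x : ℂ)).re := by
  have h : phiC t (x : ℂ) = ((phi0 x t : ℝ) : ℂ) := by
    rw [phi0, Complex.ofReal_tsum, phiC]
    refine tsum_congr fun k => ?_
    push_cast [Complex.ofReal_exp]
    congr 1
  rw [h, Complex.ofReal_re]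

/-- For every `t > 0`, the function `x ↦ φ_0(x,t)` is infinitely differentiable on `ℝ`. -/
theorem phi0_smooth (t : ℝ) (ht : 0 < t) :
    ContDiff ℝ (⊤ : ℕ∞) (fun x : ℝ => phi0 x t) := by
  have h1 : ContDiff ℝ (⊤ : ℕ∞) (phiC t) := ((phiC_diff t ht).contDiff (n := (⊤ : ℕ∞))).restrict_scalars ℝ
  have h2 : (fun x : ℝ => phi0 x t) = fun x : ℝ => (phiC t (x : ℂ)).re := by
    funext x; exact phi0_eq_re x t
  rw [h2]
  exact Complex.reCLM.contDiff.comp (h1.comp Complex.ofRealCLM.contDiff)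
end

section
/- Let u > 0, x ∈ ℝ, a ∈ ℝ \ {0}, and let (B_s)_{s≥0} be a standard one-dimensional Brownian motion starting from x with respect to a filtration (F_s)_{s≥0}. Then the process (exp(a²s/2) · φ_a(B_s, s + u))_{s≥0} is a true martingale with respect to (F_s): each exp(a²s/2)·φ_a(B_s, s+u) is integrable and E[exp(a²s'/2)·φ_a(B_{s'}, s' + u) | F_s] = exp(a²s/2)·φ_a(B_s, s + u) almost surely for all 0 ≤ s ≤ s'. -/
/-!
With `z_k = a i − 2k`, the `k`-th term of `e^{a²t/2} φ_a(b, t)` is `π / sinh(aπ)` times the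
imaginary part of `exp(z_k b − z_k² t/2)`. For every `z ∈ ℂ`, `exp(z B_s − z² (s + u)/2)` is a
complex exponential martingale, because an increment `Δ ~ N(0, τ)` independent of the past has
`E[exp(z Δ)] = exp(z² τ/2)`. These martingales are summable in `L¹`: the `L¹` norm of the `k`-th
one is `e^{a²s/2}` times the modulus of the `k`-th term of the convergent theta series at `(x, u)`.
Since conditional expectation commutes with `L¹`-convergent sums and with `Im`, the sum is a
martingale.
-/

open Real Filter

open MeasureTheory ProbabilityTheory Complex
open scoped NNReal ENNReal

namespace MeasureTheory.Martingale

variable {Ω E E' ι : Type*} [Preorder ι] {m0 : MeasurableSpace Ω} {μ : Measure Ω}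
  {ℱ : Filtration ι m0} [NormedAddCommGroup E] [NormedSpace ℝ E] [CompleteSpace E]
  [NormedAddCommGroup E'] [NormedSpace ℝ E'] [CompleteSpace E']

theorem continuousLinearMap_comp {f : ι → Ω → E} (hf : Martingale f ℱ μ) (T : E →L[ℝ] E') :
    Martingale (fun i ω => T (f i ω)) ℱ μ :=
  ⟨fun i => T.continuous.comp_stronglyMeasurable (hf.stronglyAdapted i), fun i j hij =>
    (T.comp_condExp_comm (hf.integrable j)).symm.trans ((hf.2 i j hij).fun_comp T)⟩

theorem tsum {κ : Type*} [Countable κ] {f : κ → ι → Ω → E}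
    (hf : ∀ k, Martingale (f k) ℱ μ) (hsum : ∀ i ω, Summable fun k => f k i ω)
    (hL1 : ∀ i, Summable fun k => ∫ ω, ‖f k i ω‖ ∂μ) :
    Martingale (fun i ω => ∑' k, f k i ω) ℱ μ := by
  refine ⟨fun i => stronglyMeasurable_of_tendsto atTop
    (fun t => t.stronglyMeasurable_fun_sum fun k _ => (hf k).stronglyAdapted i)
    (tendsto_pi_nhds.2 fun ω => (hsum i ω).hasSum), fun i j hij => ?_⟩
  have hlint : ∑' k, ∫⁻ ω, ‖f k j ω‖ₑ ∂μ ≠ ∞ := by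
    simp_rw [← ofReal_integral_norm_eq_lintegral_enorm ((hf _).integrable j)]
    rw [← ENNReal.ofReal_tsum_of_nonneg (fun k => integral_nonneg fun ω => norm_nonneg _) (hL1 j)]
    exact ENNReal.ofReal_ne_top
  filter_upwards [condExp_tsum (fun k => ((hf k).integrable j).aestronglyMeasurable) hlint,
    ae_all_iff.2 fun k => (hf k).2 i j hij] with ω hcond hk
  rw [hcond]
  exact tsum_congr hk

end MeasureTheory.Martingale

lemma ProbabilityTheory.integrable_cexp_mul_of_map_eq_gaussianReal {Ω : Type*}
    {m : MeasurableSpace Ω} {P : Measure Ω} [IsProbabilityMeasure P] {X : Ω → ℝ} {μ : ℝ}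
    {v : ℝ≥0} (hX : P.map X = gaussianReal μ v) (z : ℂ) :
    Integrable (fun ω => cexp (z * X ω)) P := by
  refine integrable_cexp_mul_of_re_mem_integrableExpSet
    (aemeasurable_of_map_neZero (by rw [hX]; infer_instance)) ?_
  rw [integrableExpSet, Set.mem_ofPred_eq, ← mgf_pos_iff, mgf_gaussianReal hX]
  exact Real.exp_pos _

section GaussianIncrements

variable {Ω : Type*} {m : MeasurableSpace Ω}

structure HasIndepGaussianIncrements (B : ℝ≥0 → Ω → ℝ) (F : Filtration ℝ≥0 m) (P : Measure Ω) :
    Prop where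
  adapted : Adapted F B
  map_sub : ∀ s s' : ℝ≥0, s ≤ s' →
    Measure.map (fun ω => B s' ω - B s ω) P = gaussianReal 0 (s' - s)
  indep_sub : ∀ s s' : ℝ≥0, s ≤ s' →
    Indep (MeasurableSpace.comap (fun ω => B s' ω - B s ω) Real.measurableSpace) (F s) P

variable {P : Measure Ω} {F : Filtration ℝ≥0 m} {B : ℝ≥0 → Ω → ℝ}

lemma HasIndepGaussianIncrements.measurable_sub (hB : HasIndepGaussianIncrements B F P)
    (s s' : ℝ≥0) : Measurable fun ω => B s' ω - B s ω :=
  ((hB.adapted s').mono (F.le s') le_rfl).sub ((hB.adapted s).mono (F.le s) le_rfl)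

lemma HasIndepGaussianIncrements.map_eq_gaussianReal (hB : HasIndepGaussianIncrements B F P)
    {x : ℝ} (hstart : ∀ᵐ ω ∂P, B 0 ω = x) (s : ℝ≥0) :
    P.map (B s) = gaussianReal x s := by
  have hBs : B s =ᵐ[P] fun ω => (B s ω - B 0 ω) + x := by
    filter_upwards [hstart] with ω h0
    rw [h0, sub_add_cancel]
  rw [Measure.map_congr hBs, ← Function.comp_def (· + x),
    ← Measure.map_map (measurable_add_const x) (hB.measurable_sub 0 s), hB.map_sub 0 s zero_le,
    tsub_zero, gaussianReal_map_add_const, zero_add]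

theorem HasIndepGaussianIncrements.martingale_cexp [IsProbabilityMeasure P]
    (hB : HasIndepGaussianIncrements B F P) {x : ℝ} (hstart : ∀ᵐ ω ∂P, B 0 ω = x)
    (z : ℂ) (t : ℝ) :
    Martingale (fun s ω => cexp (z * B s ω - z ^ 2 * ((s : ℝ) + t) / 2)) F P := by
  set M := fun (s : ℝ≥0) ω => cexp (z * B s ω - z ^ 2 * ((s : ℝ) + t) / 2)
  have hM_int (s : ℝ≥0) : Integrable (M s) P := by
    refine ((integrable_cexp_mul_of_map_eq_gaussianReal (hB.map_eq_gaussianReal hstart s)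
      z).div_const (cexp (z ^ 2 * ((s : ℝ) + t) / 2))).congr (ae_of_all _ fun ω => ?_)
    simp only [M, Complex.exp_sub]
  have hM_adapted : StronglyAdapted F M := fun s =>
    ((by fun_prop : Continuous fun b : ℝ => cexp (z * b - z ^ 2 * ((s : ℝ) + t) / 2)
      ).measurable.comp (hB.adapted s)).stronglyMeasurable
  refine ⟨hM_adapted, fun s s' hss' => ?_⟩
  set E := fun ω => cexp (z * ((B s' ω - B s ω : ℝ) : ℂ) - ((s' : ℝ) - s) * z ^ 2 / 2)
  have hsplit : M s' = fun ω => M s ω * E ω := by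
    funext ω
    simp only [M, E, ← Complex.exp_add]
    push_cast
    ring_nf
  have hE_int : Integrable E P := by
    refine ((integrable_cexp_mul_of_map_eq_gaussianReal (hB.map_sub s s' hss') z).div_const
      (cexp (((s' : ℝ) - s) * z ^ 2 / 2))).congr (ae_of_all _ fun ω => ?_)
    simp only [E, Complex.exp_sub]
  have hE_meas : StronglyMeasurable[MeasurableSpace.comap (fun ω => B s' ω - B s ω)
      Real.measurableSpace] E :=
    ((by fun_prop : Continuous fun b : ℝ => cexp (z * b - ((s' : ℝ) - s) * z ^ 2 / 2)
      ).measurable.comp (comap_measurable (fun ω => B s' ω - B s ω))).stronglyMeasurable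
  have hE_mean : ∫ ω, E ω ∂P = 1 := by
    have hmgf := complexMGF_gaussianReal (hB.map_sub s s' hss') z
    rw [complexMGF, NNReal.coe_sub hss'] at hmgf
    simp only [E, Complex.exp_sub]
    rw [integral_div, hmgf, ofReal_zero, mul_zero, zero_add, ofReal_sub,
      div_self (Complex.exp_ne_zero _)]
  have hE_cond : P[E | F s] =ᵐ[P] fun _ => 1 :=
    hE_mean ▸ condExp_indep_eq (hB.measurable_sub s s').comap_le (F.le s) hE_meas
      (hB.indep_sub s s' hss')
  rw [hsplit]
  filter_upwards [condExp_bilin_of_aestronglyMeasurable_left (m := F s)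
    (ContinuousLinearMap.mul ℝ ℂ) (hM_adapted s).aestronglyMeasurable (hsplit ▸ hM_int s')
    hE_int, hE_cond] with ω h_pull h_one
  simp only [ContinuousLinearMap.mul_apply'] at h_pull
  rw [h_pull, h_one, mul_one]

lemma HasIndepGaussianIncrements.integral_norm_cexp [IsProbabilityMeasure P]
    (hB : HasIndepGaussianIncrements B F P) {x : ℝ} (hstart : ∀ᵐ ω ∂P, B 0 ω = x)
    (z : ℂ) (t : ℝ) (s : ℝ≥0) :
    ∫ ω, ‖cexp (z * B s ω - z ^ 2 * ((s : ℝ) + t) / 2)‖ ∂P =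
      Real.exp (z.im ^ 2 * s / 2) * ‖cexp (z * x - z ^ 2 * t / 2)‖ := by
  have hre (b r : ℝ) :
      (z * b - z ^ 2 * r / 2).re = z.re * b - (z.re ^ 2 - z.im ^ 2) * r / 2 := by
    simp [sq]
  have hmgf := mgf_gaussianReal (hB.map_eq_gaussianReal hstart s) z.re
  rw [mgf] at hmgf
  simp_rw [Complex.norm_exp, ← ofReal_add, hre, Real.exp_sub, integral_div, hmgf]
  rw [← Real.exp_sub, ← Real.exp_sub, ← Real.exp_add]
  ring_nf

end GaussianIncrements

lemma cexp_eq_mul_jacobiTheta₂_term (a b t : ℝ) (k : ℤ) :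
    cexp ((a * I - 2 * k) * b - (a * I - 2 * k) ^ 2 * t / 2) =
      cexp (a * b * I + a ^ 2 * t / 2) *
        jacobiTheta₂_term k ((a * t + b * I) / π) (2 * t * I / π) := by
  rw [jacobiTheta₂_term, ← Complex.exp_add]
  congr 1
  field_simp
  ring_nf
  rw [I_sq]
  ring

lemma summable_cexp_mul_sub (a b : ℝ) {t : ℝ} (ht : 0 < t) :
    Summable fun k : ℤ => cexp ((a * I - 2 * k) * b - (a * I - 2 * k) ^ 2 * t / 2) := by
  simp_rw [cexp_eq_mul_jacobiTheta₂_term]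
  refine ((summable_jacobiTheta₂_term_iff _ _).2 ?_).mul_left _
  have : (2 * t * I / π : ℂ) = ((2 * t / π : ℝ) : ℂ) * I := by push_cast; ring
  rw [this, mul_I_im, ofReal_re]
  positivity

lemma exp_mul_phi_eq_tsum_im (a b t : ℝ) :
    rexp (a ^ 2 * t / 2) * phi a b t = π / Real.sinh (a * π) *
      ∑' k : ℤ, (cexp ((a * I - 2 * k) * b - (a * I - 2 * k) ^ 2 * t / 2)).im := by
  rw [phi, mul_left_comm, ← tsum_mul_left]
  congr 1
  refine tsum_congr fun k => ?_
  have hw : (a * I - 2 * k) * b - (a * I - 2 * k) ^ 2 * t / 2 =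
      ((a ^ 2 * t / 2 + -2 * (k * b + k ^ 2 * t) : ℝ) : ℂ) +
        ((a * b + 2 * k * a * t : ℝ) : ℂ) * I := by
    push_cast
    ring_nf
    rw [I_sq]
    ring
  rw [hw, exp_im, add_re, add_im, ofReal_re, ofReal_im, mul_I_re, mul_I_im, ofReal_re, ofReal_im,
    neg_zero, add_zero, zero_add, Real.exp_add]
  ring

theorem phi_martingale_general {Ω : Type*} [m : MeasurableSpace Ω] {P : Measure Ω}
    [IsProbabilityMeasure P] (F : Filtration ℝ≥0 m) (B : ℝ≥0 → Ω → ℝ) (x u : ℝ) (hu : 0 < u)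
    (a : ℝ)
    (hadapted : Adapted F B)
    (hstart : ∀ᵐ ω ∂P, B 0 ω = x)
    (hgauss : ∀ s s' : ℝ≥0, s ≤ s' →
      Measure.map (fun ω => B s' ω - B s ω) P = gaussianReal 0 (s' - s))
    (hindep : ∀ s s' : ℝ≥0, s ≤ s' →
      Indep (MeasurableSpace.comap (fun ω => B s' ω - B s ω) Real.measurableSpace) (F s) P) :
    (∀ s : ℝ≥0, Integrable
      (fun ω => Real.exp (a ^ 2 * (s : ℝ) / 2) * phi a (B s ω) ((s : ℝ) + u)) P) ∧
    Martingale
      (fun (s : ℝ≥0) (ω : Ω) => Real.exp (a ^ 2 * (s : ℝ) / 2) * phi a (B s ω) ((s : ℝ) + u))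
      F P := by
  have hB : HasIndepGaussianIncrements B F P := ⟨hadapted, hgauss, hindep⟩
  have hmart (k : ℤ) := hB.martingale_cexp hstart (a * I - 2 * k) u
  have hsum (s : ℝ≥0) (ω : Ω) : Summable fun k : ℤ =>
      cexp ((a * I - 2 * k) * B s ω - (a * I - 2 * k) ^ 2 * ((s : ℝ) + u) / 2) := by
    simpa using summable_cexp_mul_sub a (B s ω) (by positivity : 0 < (s : ℝ) + u)
  have hL1 (s : ℝ≥0) : Summable fun k : ℤ =>
      ∫ ω, ‖cexp ((a * I - 2 * k) * B s ω - (a * I - 2 * k) ^ 2 * ((s : ℝ) + u) / 2)‖ ∂P := by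
    simp_rw [hB.integral_norm_cexp hstart]
    simpa using (summable_cexp_mul_sub a x hu).norm.mul_left (Real.exp (a ^ 2 * s / 2))
  have hM := ((Martingale.tsum hmart hsum hL1).continuousLinearMap_comp imCLM).smul
    (π / Real.sinh (a * π) * Real.exp (-(a ^ 2 * u / 2)))
  have hX :
      (fun (s : ℝ≥0) (ω : Ω) => Real.exp (a ^ 2 * (s : ℝ) / 2) * phi a (B s ω) ((s : ℝ) + u)) =
      (π / Real.sinh (a * π) * Real.exp (-(a ^ 2 * u / 2))) • fun s ω => imCLM (∑' k : ℤ,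
        cexp ((a * I - 2 * k) * B s ω - (a * I - 2 * k) ^ 2 * ((s : ℝ) + u) / 2)) := by
    funext s ω
    rw [Pi.smul_apply, Pi.smul_apply, smul_eq_mul, imCLM_apply, im_tsum (hsum s ω),
      show a ^ 2 * (s : ℝ) / 2 = -(a ^ 2 * u / 2) + a ^ 2 * ((s : ℝ) + u) / 2 by ring,
      Real.exp_add, mul_assoc, exp_mul_phi_eq_tsum_im]
    push_cast
    ring
  rw [← hX] at hM
  exact ⟨hM.integrable, hM⟩

/-- Let `u > 0`, `x ∈ ℝ`, `a ≠ 0`, and let `(B_s)_{s ≥ 0}` be a standard one-dimensional Brownian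
motion starting from `x` with respect to a filtration `(F_s)_{s ≥ 0}`: it is adapted, has a.s.
continuous paths, `B_0 = x` a.s., and for `s ≤ s'` the increment `B_{s'} − B_s` is independent of
`F_s` and Gaussian with mean `0` and variance `s' − s`. Then
`(exp(a²s/2) · φ_a(B_s, s + u))_{s ≥ 0}` is a true martingale: each term is integrable and
`E[exp(a²s'/2)·φ_a(B_{s'}, s' + u) | F_s] = exp(a²s/2)·φ_a(B_s, s + u)` a.s. for `s ≤ s'`. -/
theorem phi_martingale {Ω : Type*} [m : MeasurableSpace Ω] {P : Measure Ω}
    [IsProbabilityMeasure P] (F : Filtration ℝ≥0 m) (B : ℝ≥0 → Ω → ℝ) (x u : ℝ) (hu : 0 < u)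
    (a : ℝ) (ha : a ≠ 0)
    (hadapted : Adapted F B)
    (hcont : ∀ᵐ ω ∂P, Continuous fun s : ℝ≥0 => B s ω)
    (hstart : ∀ᵐ ω ∂P, B 0 ω = x)
    (hgauss : ∀ s s' : ℝ≥0, s ≤ s' →
      Measure.map (fun ω => B s' ω - B s ω) P = gaussianReal 0 (s' - s))
    (hindep : ∀ s s' : ℝ≥0, s ≤ s' →
      Indep (MeasurableSpace.comap (fun ω => B s' ω - B s ω) Real.measurableSpace) (F s) P) :
    (∀ s : ℝ≥0, Integrable
      (fun ω => Real.exp (a ^ 2 * (s : ℝ) / 2) * phi a (B s ω) ((s : ℝ) + u)) P) ∧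
    Martingale
      (fun (s : ℝ≥0) (ω : Ω) => Real.exp (a ^ 2 * (s : ℝ) / 2) * phi a (B s ω) ((s : ℝ) + u))
      F P :=
  phi_martingale_general (m := m) F B x u hu a hadapted hstart hgauss hindep
end
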